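/- arXiv:1310.6481 — 11 statements merged into one kernel-verified Lean document; each statement's English description precedes it below -/
import Mathlib

section
/- Let f : ℝⁿ → ℝⁿ be an analytic vector field, let D ⊆ ℝⁿ be a domain, X₀ ⊆ ℝⁿ an initial set and U ⊆ ℝⁿ an unsafe set. Let φ : ℝⁿ → ℝ and ψ : ℝ → ℝ be analytic and assume: (1) φ(x) ≤ 0 for all x ∈ X₀; (2) L_f φ(x) − ψ(φ(x)) ≤ 0 for all x ∈ D; (3) φ(x) > 0 for all x ∈ U; (4) every analytic function θ : [0,∞) → ℝ satisfying θ′(t) = ψ(θ(t)) for all t ≥ 0 and θ(0) ≤ 0 also satisfies θ(ξ) ≤ 0 for all ξ > 0; and (5) for every c ≤ 0 there exists an analytic θ : [0,∞) → ℝ with θ′(t) = ψ(θ(t)) for all t ≥ 0 and θ(0) = c. Then every differentiable trajectory x : [0,∞) → ℝⁿ with x′(t) = f(x(t)) for all t ≥ 0, x(0) ∈ X₀ and x(t) ∈ D for all t ≥ 0 satisfies φ(x(t)) ≤ 0 for all t ≥ 0; in particular x(t) ∉ U for all t ≥ 0. -/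
/-!
Along a trajectory `x` in `D`, the function `g t = φ (x t)` satisfies the differential
inequality `g' ≤ ψ ∘ g` and starts at `g 0 ≤ 0`. Let `θ` solve `θ' = ψ ∘ θ` with `θ 0 = g 0`.
Since `ψ` is locally Lipschitz, a fence argument with the barrier `ε e^{(K+1)t}`, where `K` is a
Lipschitz constant of `ψ` on the values of `g` and `θ`, gives `g ≤ θ`, and `θ` stays nonpositive by (4). Hence `φ ∘ x ≤ 0`, which excludes `U` by (3).
-/

open Set NNReal

section Comparison

variable {ψ g g' θ : ℝ → ℝ} {a b : ℝ}

lemma sub_le_mul_exp_of_lipschitzOnWith {K : ℝ≥0} {S : Set ℝ} (hψ : LipschitzOnWith K ψ S)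
    (hgS : ∀ t ∈ Icc a b, g t ∈ S) (hθS : ∀ t ∈ Icc a b, θ t ∈ S)
    (hg : ∀ t ∈ Icc a b, HasDerivAt g (g' t) t) (hgψ : ∀ t ∈ Icc a b, g' t ≤ ψ (g t))
    (hθ : ∀ t ∈ Icc a b, HasDerivAt θ (ψ (θ t)) t) (ha : g a ≤ θ a) {ε : ℝ} (hε : 0 < ε) :
    ∀ t ∈ Icc a b, g t - θ t ≤ ε * Real.exp ((K + 1) * (t - a)) := by
  have hB : ∀ t, HasDerivAt (fun s ↦ ε * Real.exp ((K + 1) * (s - a)))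
      (ε * ((K + 1) * Real.exp ((K + 1) * (t - a)))) t := fun t ↦ by
    simpa [mul_comm, mul_left_comm] using
      ((((hasDerivAt_id t).sub_const a).const_mul ((K : ℝ) + 1)).exp).const_mul ε
  refine image_le_of_deriv_right_lt_deriv_boundary
    (fun t ht ↦ ((hg t ht).continuousAt.sub (hθ t ht).continuousAt).continuousWithinAt)
    (fun t ht ↦
      ((hg t (Ico_subset_Icc_self ht)).sub (hθ t (Ico_subset_Icc_self ht))).hasDerivWithinAt)
    (by simp only [Pi.sub_apply, sub_self, mul_zero, Real.exp_zero, mul_one]; linarith) hB ?_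
  intro t ht (hfence : g t - θ t = _)
  have ht := Ico_subset_Icc_self ht
  have hpos : 0 < g t - θ t := hfence ▸ mul_pos hε (Real.exp_pos _)
  have hlip : ψ (g t) - ψ (θ t) ≤ K * (g t - θ t) := by
    have := hψ.dist_le_mul (g t) (hgS t ht) (θ t) (hθS t ht)
    rw [Real.dist_eq, Real.dist_eq, abs_of_pos hpos] at this
    exact (le_abs_self _).trans this
  have hgψ := hgψ t ht
  change g' t - ψ (θ t) < ε * ((K + 1) * Real.exp ((K + 1) * (t - a)))
  rw [hfence] at hlip hpos
  linarith

theorem le_of_hasDerivAt_le_of_locallyLipschitz (hψ : LocallyLipschitz ψ)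
    (hg : ∀ t ∈ Icc a b, HasDerivAt g (g' t) t) (hgψ : ∀ t ∈ Icc a b, g' t ≤ ψ (g t))
    (hθ : ∀ t ∈ Icc a b, HasDerivAt θ (ψ (θ t)) t) (ha : g a ≤ θ a) :
    ∀ t ∈ Icc a b, g t ≤ θ t := by
  have hgc : ContinuousOn g (Icc a b) := fun t ht ↦ (hg t ht).continuousAt.continuousWithinAt
  have hθc : ContinuousOn θ (Icc a b) := fun t ht ↦ (hθ t ht).continuousAt.continuousWithinAt
  obtain ⟨K, hK⟩ := hψ.locallyLipschitzOn.exists_lipschitzOnWith_of_compact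
    ((isCompact_Icc.image_of_continuousOn hgc).union (isCompact_Icc.image_of_continuousOn hθc))
  intro t ht
  refine sub_nonpos.1 (le_of_forall_pos_le_add fun δ hδ ↦ ?_)
  have hfence := sub_le_mul_exp_of_lipschitzOnWith hK
    (fun s hs ↦ Or.inl (mem_image_of_mem g hs)) (fun s hs ↦ Or.inr (mem_image_of_mem θ hs))
    hg hgψ hθ ha (ε := δ * Real.exp (-((K + 1) * (t - a)))) (by positivity) t ht
  rw [mul_assoc, ← Real.exp_add, neg_add_cancel, Real.exp_zero, mul_one] at hfence
  linarith

end Comparison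

theorem general_barrier_condition_general {n : ℕ}
    (f : (Fin n → ℝ) → (Fin n → ℝ)) (D X₀ U : Set (Fin n → ℝ))
    (φ : (Fin n → ℝ) → ℝ) (ψ : ℝ → ℝ)
    (hφa : ∀ x, AnalyticAt ℝ φ x)
    (hψa : ∀ y, AnalyticAt ℝ ψ y)
    (h1 : ∀ x ∈ X₀, φ x ≤ 0)
    (h2 : ∀ x ∈ D, fderiv ℝ φ x (f x) - ψ (φ x) ≤ 0)
    (h3 : ∀ x ∈ U, 0 < φ x)
    (h4 : ∀ θ : ℝ → ℝ, (∀ t, AnalyticAt ℝ θ t) →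
      (∀ t ≥ (0:ℝ), deriv θ t = ψ (θ t)) → θ 0 ≤ 0 →
      ∀ ξ > (0:ℝ), θ ξ ≤ 0)
    (h5 : ∀ c ≤ (0:ℝ), ∃ θ : ℝ → ℝ, (∀ t, AnalyticAt ℝ θ t) ∧
      (∀ t ≥ (0:ℝ), deriv θ t = ψ (θ t)) ∧ θ 0 = c) :
    ∀ x : ℝ → (Fin n → ℝ),
      (∀ t ≥ (0:ℝ), HasDerivAt x (f (x t)) t) →
      x 0 ∈ X₀ → (∀ t ≥ (0:ℝ), x t ∈ D) →
      (∀ t ≥ (0:ℝ), φ (x t) ≤ 0) ∧ (∀ t ≥ (0:ℝ), x t ∉ U) := by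
  intro x hx hx0 hxD
  have hψ : LocallyLipschitz ψ :=
    (AnalyticOnNhd.contDiff (n := 1) fun y _ ↦ hψa y).locallyLipschitz
  have hφx : ∀ t ≥ (0:ℝ), HasDerivAt (fun s ↦ φ (x s)) (fderiv ℝ φ (x t) (f (x t))) t :=
    fun t ht ↦ (hφa (x t)).differentiableAt.hasFDerivAt.comp_hasDerivAt t (hx t ht)
  have hsafe : ∀ t ≥ (0:ℝ), φ (x t) ≤ 0 := by
    intro T hT
    rcases hT.eq_or_lt with rfl | hT
    · exact h1 _ hx0
    obtain ⟨θ, hθa, hθ, hθ0⟩ := h5 (φ (x 0)) (h1 _ hx0)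
    have hφθ := le_of_hasDerivAt_le_of_locallyLipschitz hψ (fun t ht ↦ hφx t ht.1)
      (fun t ht ↦ by linarith [h2 _ (hxD t ht.1)])
      (fun t ht ↦ hθ t ht.1 ▸ (hθa t).differentiableAt.hasDerivAt) hθ0.ge T ⟨hT.le, le_rfl⟩
    exact hφθ.trans (h4 θ hθa hθ (hθ0 ▸ h1 _ hx0) T hT)
  exact ⟨hsafe, fun t ht hU ↦ (h3 _ hU).not_ge (hsafe t ht)⟩

/-- **General Barrier Condition (GBC)** for a continuous dynamical system
`ẋ = f(x)` with domain `D`, initial set `X₀` and unsafe set `U`.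
The Lie derivative of `φ` along `f` at `x` is `fderiv ℝ φ x (f x)`. -/
theorem general_barrier_condition {n : ℕ}
    (f : (Fin n → ℝ) → (Fin n → ℝ)) (D X₀ U : Set (Fin n → ℝ))
    (φ : (Fin n → ℝ) → ℝ) (ψ : ℝ → ℝ)
    (hf : ∀ x, AnalyticAt ℝ f x)
    (hφa : ∀ x, AnalyticAt ℝ φ x)
    (hψa : ∀ y, AnalyticAt ℝ ψ y)
    (h1 : ∀ x ∈ X₀, φ x ≤ 0)
    (h2 : ∀ x ∈ D, fderiv ℝ φ x (f x) - ψ (φ x) ≤ 0)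
    (h3 : ∀ x ∈ U, 0 < φ x)
    (h4 : ∀ θ : ℝ → ℝ, (∀ t, AnalyticAt ℝ θ t) →
      (∀ t ≥ (0:ℝ), deriv θ t = ψ (θ t)) → θ 0 ≤ 0 →
      ∀ ξ > (0:ℝ), θ ξ ≤ 0)
    (h5 : ∀ c ≤ (0:ℝ), ∃ θ : ℝ → ℝ, (∀ t, AnalyticAt ℝ θ t) ∧
      (∀ t ≥ (0:ℝ), deriv θ t = ψ (θ t)) ∧ θ 0 = c) :
    ∀ x : ℝ → (Fin n → ℝ),
      (∀ t ≥ (0:ℝ), HasDerivAt x (f (x t)) t) →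
      x 0 ∈ X₀ → (∀ t ≥ (0:ℝ), x t ∈ D) →
      (∀ t ≥ (0:ℝ), φ (x t) ≤ 0) ∧ (∀ t ≥ (0:ℝ), x t ∉ U) :=
  general_barrier_condition_general f D X₀ U φ ψ hφa hψa h1 h2 h3 h4 h5
end

section
/- Let f : ℝⁿ → ℝⁿ be an analytic vector field with domain D ⊆ ℝⁿ, initial set X₀ ⊆ ℝⁿ and unsafe set U ⊆ ℝⁿ. Let χ, φ : ℝⁿ → ℝ and ψ₁, ψ₂ : ℝ → ℝ be analytic and let δ : ℝⁿ → ℝ be a polynomial with δ(x) ≥ 0 for all x. Assume: (a) χ(x) ≤ 0 for all x ∈ X₀; (b) L_f χ(x) − ψ₁(χ(x)) ≤ 0 for all x ∈ D; (c) every analytic θ : [0,∞) → ℝ with θ′(t) = ψ₁(θ(t)) for all t ≥ 0 and θ(0) ≤ 0 satisfies θ(ξ) ≤ 0 for all ξ > 0, and for every c ≤ 0 such a solution with θ(0) = c exists; (d) φ(x) ≤ 0 for all x ∈ X₀; (e) L_f φ(x) − ψ₂(φ(x)) − δ(x)·χ(x) ≤ 0 for all x ∈ D; (f) φ(x) > 0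 for all x ∈ U; (g) every analytic θ : [0,∞) → ℝ with θ′(t) = ψ₂(θ(t)) for all t ≥ 0 and θ(0) ≤ 0 satisfies θ(ξ) ≤ 0 for all ξ > 0, and for every c ≤ 0 such a solution with θ(0) = c exists. Then every differentiable trajectory x : [0,∞) → ℝⁿ with x′(t) = f(x(t)) for all t ≥ 0, x(0) ∈ X₀ and x(t) ∈ D for all t ≥ 0 satisfies x(t) ∉ U for all t ≥ 0. -/
/-! The argument is a comparison principle: if `g' ≤ ψ (g)` and `θ' = ψ (θ)` with
`g 0 ≤ θ 0`, then `g ≤ θ`, because after the last time `g - θ` vanishes it satisfies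
`(g - θ)' ≤ C (g - θ)` (with `C` a Lipschitz constant of `ψ`) and Grönwall forces it to stay
`≤ 0`. Comparing `χ ∘ x` with the nonpositive solution of `θ' = ψ₁ (θ)` gives `χ ≤ 0` along the
trajectory; then `δ χ ≤ 0`, so `φ ∘ x` is a subsolution of `θ' = ψ₂ (θ)` and likewise `φ ≤ 0`
along it, whereas `φ > 0` on `U`. -/

open Set

theorem exists_last_zero_of_nonpos_of_pos {h : ℝ → ℝ} {a b : ℝ} (hab : a ≤ b)
    (hh : ContinuousOn h (Icc a b)) (ha : h a ≤ 0) (hb : 0 < h b) :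
    ∃ s ∈ Ico a b, h s = 0 ∧ ∀ u ∈ Icc s b, 0 ≤ h u := by
  set S := Icc a b ∩ h ⁻¹' {0}
  have hS : IsCompact S := isCompact_Icc.of_isClosed_subset
    (hh.preimage_isClosed_of_isClosed isClosed_Icc isClosed_singleton) inter_subset_left
  obtain ⟨c, hc, hc0⟩ := intermediate_value_Icc hab hh ⟨ha, hb.le⟩
  obtain ⟨s, ⟨⟨has, hsb⟩, hs0⟩, hmax⟩ := hS.exists_isGreatest ⟨c, hc, hc0⟩
  have hs0 : h s = 0 := hs0
  refine ⟨s, ⟨has, hsb.lt_of_ne fun hsb => hb.ne' (hsb ▸ hs0)⟩, hs0, fun u ⟨hsu, hub⟩ => ?_⟩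
  by_contra! hu
  obtain ⟨c, ⟨huc, hcb⟩, hc0⟩ :=
    intermediate_value_Icc hub (hh.mono (Icc_subset_Icc (has.trans hsu) le_rfl)) ⟨hu.le, hb.le⟩
  have hcs : c ≤ s := hmax ⟨⟨has.trans (hsu.trans huc), hcb⟩, hc0⟩
  have hcu : c = u := le_antisymm (hcs.trans hsu) huc
  exact hu.ne (hcu ▸ hc0)

theorem nonpos_of_deriv_right_le_mul {h h' : ℝ → ℝ} {K a b : ℝ}
    (hh : ContinuousOn h (Icc a b)) (hh' : ∀ x ∈ Ico a b, HasDerivWithinAt h (h' x) (Ici x) x)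
    (ha : h a ≤ 0) (bound : ∀ x ∈ Ico a b, h' x ≤ K * h x) : ∀ x ∈ Icc a b, h x ≤ 0 := by
  intro x hx
  calc h x ≤ gronwallBound 0 K 0 (x - a) :=
        le_gronwallBound_of_liminf_deriv_right_le hh
          (fun y hy _ hr => (hh' y hy).liminf_right_slope_le hr) ha (by simpa using bound) x hx
    _ = 0 := gronwallBound_ε0_δ0 K _

theorem le_of_deriv_le_of_hasDerivAt_eq {ψ : ℝ → ℝ} (hψ : LocallyLipschitz ψ)
    {g g' θ : ℝ → ℝ} {a b : ℝ} (hab : a ≤ b) (hg : ∀ t ∈ Icc a b, HasDerivAt g (g' t) t)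
    (hθ : ∀ t ∈ Icc a b, HasDerivAt θ (ψ (θ t)) t) (hle : ∀ t ∈ Icc a b, g' t ≤ ψ (g t))
    (ha : g a ≤ θ a) : g b ≤ θ b := by
  by_contra! hb
  have hcont : ContinuousOn (g - θ) (Icc a b) := fun t ht =>
    ((hg t ht).continuousAt.sub (hθ t ht).continuousAt).continuousWithinAt
  obtain ⟨s, ⟨has, hsb⟩, hs0, hpos⟩ :=
    exists_last_zero_of_nonpos_of_pos hab hcont (sub_nonpos.2 ha) (sub_pos.2 hb)
  have hsub : Icc s b ⊆ Icc a b := Icc_subset_Icc has le_rfl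
  have hgc : ContinuousOn g (Icc s b) := fun t ht =>
    (hg t (hsub ht)).continuousAt.continuousWithinAt
  have hθc : ContinuousOn θ (Icc s b) := fun t ht =>
    (hθ t (hsub ht)).continuousAt.continuousWithinAt
  obtain ⟨C, hC⟩ := hψ.locallyLipschitzOn.exists_lipschitzOnWith_of_compact
    ((isCompact_Icc.image_of_continuousOn hgc).union (isCompact_Icc.image_of_continuousOn hθc))
  have bound : ∀ t ∈ Ico s b, g' t - ψ (θ t) ≤ C * (g - θ) t := by
    intro t ht
    have ht' : t ∈ Icc s b := Ico_subset_Icc_self ht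
    have hlip : dist (ψ (g t)) (ψ (θ t)) ≤ C * dist (g t) (θ t) :=
      hC.dist_le_mul _ (Or.inl ⟨t, ht', rfl⟩) _ (Or.inr ⟨t, ht', rfl⟩)
    have hgθ : 0 ≤ g t - θ t := hpos t ht'
    rw [Real.dist_eq, Real.dist_eq, abs_of_nonneg hgθ] at hlip
    show g' t - ψ (θ t) ≤ C * (g t - θ t)
    linarith [le_abs_self (ψ (g t) - ψ (θ t)), hle t (hsub ht')]
  have hgθb := nonpos_of_deriv_right_le_mul (hcont.mono hsub)
    (fun t ht => ((hg t (hsub (Ico_subset_Icc_self ht))).sub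
      (hθ t (hsub (Ico_subset_Icc_self ht)))).hasDerivWithinAt) hs0.le bound b ⟨hsb.le, le_rfl⟩
  exact hgθb.not_gt (sub_pos.2 hb)

theorem nonpos_of_deriv_le_of_nonpos_solutions {ψ : ℝ → ℝ} (hψ : ∀ y, AnalyticAt ℝ ψ y)
    (hpres : ∀ θ : ℝ → ℝ, (∀ t, AnalyticAt ℝ θ t) →
      (∀ t ≥ (0:ℝ), deriv θ t = ψ (θ t)) → θ 0 ≤ 0 → ∀ ξ > (0:ℝ), θ ξ ≤ 0)
    (hex : ∀ c ≤ (0:ℝ), ∃ θ : ℝ → ℝ, (∀ t, AnalyticAt ℝ θ t) ∧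
      (∀ t ≥ (0:ℝ), deriv θ t = ψ (θ t)) ∧ θ 0 = c)
    {g g' : ℝ → ℝ} (hg : ∀ t ≥ (0:ℝ), HasDerivAt g (g' t) t)
    (hle : ∀ t ≥ (0:ℝ), g' t ≤ ψ (g t)) (h0 : g 0 ≤ 0) {t : ℝ} (ht : 0 ≤ t) : g t ≤ 0 := by
  obtain rfl | ht := ht.eq_or_lt
  · exact h0
  obtain ⟨θ, hθa, hθode, hθ0⟩ := hex (g 0) h0
  have hψlip : LocallyLipschitz ψ :=
    (AnalyticOnNhd.contDiff (n := 1) fun y _ => hψ y).locallyLipschitz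
  have hθ : ∀ u ∈ Icc 0 t, HasDerivAt θ (ψ (θ u)) u := fun u hu =>
    hθode u hu.1 ▸ (hθa u).differentiableAt.hasDerivAt
  calc g t ≤ θ t := le_of_deriv_le_of_hasDerivAt_eq hψlip ht.le (fun u hu => hg u hu.1) hθ
        (fun u hu => hle u hu.1) hθ0.ge
    _ ≤ 0 := hpres θ hθa hθode (hθ0 ▸ h0) t ht

theorem combined_barrier_certificate_general {n : ℕ}
    (f : (Fin n → ℝ) → (Fin n → ℝ)) (D X₀ U : Set (Fin n → ℝ))
    (χ φ : (Fin n → ℝ) → ℝ) (ψ₁ ψ₂ : ℝ → ℝ) (δ : (Fin n → ℝ) → ℝ)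
    (hχa : ∀ x, AnalyticAt ℝ χ x)
    (hφa : ∀ x, AnalyticAt ℝ φ x)
    (hψ₁a : ∀ y, AnalyticAt ℝ ψ₁ y)
    (hψ₂a : ∀ y, AnalyticAt ℝ ψ₂ y)
    (hδ : ∀ x, 0 ≤ δ x)
    (ha : ∀ x ∈ X₀, χ x ≤ 0)
    (hb : ∀ x ∈ D, fderiv ℝ χ x (f x) - ψ₁ (χ x) ≤ 0)
    (hc1 : ∀ θ : ℝ → ℝ, (∀ t, AnalyticAt ℝ θ t) →
      (∀ t ≥ (0:ℝ), deriv θ t = ψ₁ (θ t)) → θ 0 ≤ 0 →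
      ∀ ξ > (0:ℝ), θ ξ ≤ 0)
    (hc2 : ∀ c ≤ (0:ℝ), ∃ θ : ℝ → ℝ, (∀ t, AnalyticAt ℝ θ t) ∧
      (∀ t ≥ (0:ℝ), deriv θ t = ψ₁ (θ t)) ∧ θ 0 = c)
    (hd : ∀ x ∈ X₀, φ x ≤ 0)
    (he : ∀ x ∈ D, fderiv ℝ φ x (f x) - ψ₂ (φ x) - δ x * χ x ≤ 0)
    (hfU : ∀ x ∈ U, 0 < φ x)
    (hg1 : ∀ θ : ℝ → ℝ, (∀ t, AnalyticAt ℝ θ t) →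
      (∀ t ≥ (0:ℝ), deriv θ t = ψ₂ (θ t)) → θ 0 ≤ 0 →
      ∀ ξ > (0:ℝ), θ ξ ≤ 0)
    (hg2 : ∀ c ≤ (0:ℝ), ∃ θ : ℝ → ℝ, (∀ t, AnalyticAt ℝ θ t) ∧
      (∀ t ≥ (0:ℝ), deriv θ t = ψ₂ (θ t)) ∧ θ 0 = c) :
    ∀ x : ℝ → (Fin n → ℝ),
      (∀ t ≥ (0:ℝ), HasDerivAt x (f (x t)) t) →
      x 0 ∈ X₀ → (∀ t ≥ (0:ℝ), x t ∈ D) →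
      ∀ t ≥ (0:ℝ), x t ∉ U := by
  intro x hx hx0 hxD t ht hxU
  have hlie : ∀ V : (Fin n → ℝ) → ℝ, (∀ y, AnalyticAt ℝ V y) →
      ∀ s ≥ (0:ℝ), HasDerivAt (fun u => V (x u)) (fderiv ℝ V (x s) (f (x s))) s :=
    fun V hV s hs => (hV (x s)).differentiableAt.hasFDerivAt.comp_hasDerivAt s (hx s hs)
  have hχ : ∀ s ≥ (0:ℝ), χ (x s) ≤ 0 := fun s hs =>
    nonpos_of_deriv_le_of_nonpos_solutions hψ₁a hc1 hc2 (hlie χ hχa)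
      (fun u hu => by linarith [hb _ (hxD u hu)]) (ha _ hx0) hs
  have hφ : φ (x t) ≤ 0 :=
    nonpos_of_deriv_le_of_nonpos_solutions hψ₂a hg1 hg2 (hlie φ hφa)
      (fun u hu => by
        linarith [he _ (hxD u hu), mul_nonpos_of_nonneg_of_nonpos (hδ (x u)) (hχ u hu)])
      (hd _ hx0) ht
  exact (hfU _ hxU).not_ge hφ

/-- **Combined barrier certificates** for a continuous dynamical system
`ẋ = f(x)`: if `(χ, φ)` is a combined barrier certificate (with comparison
functions `ψ₁, ψ₂` and a nonnegative polynomial multiplier `δ`), then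
every trajectory staying in the domain `D` avoids the unsafe set `U`. -/
theorem combined_barrier_certificate {n : ℕ}
    (f : (Fin n → ℝ) → (Fin n → ℝ)) (D X₀ U : Set (Fin n → ℝ))
    (χ φ : (Fin n → ℝ) → ℝ) (ψ₁ ψ₂ : ℝ → ℝ) (δ : (Fin n → ℝ) → ℝ)
    (hf : ∀ x, AnalyticAt ℝ f x)
    (hχa : ∀ x, AnalyticAt ℝ χ x)
    (hφa : ∀ x, AnalyticAt ℝ φ x)
    (hψ₁a : ∀ y, AnalyticAt ℝ ψ₁ y)
    (hψ₂a : ∀ y, AnalyticAt ℝ ψ₂ y)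
    (hδpoly : ∃ p : MvPolynomial (Fin n) ℝ, ∀ x, δ x = MvPolynomial.eval x p)
    (hδ : ∀ x, 0 ≤ δ x)
    (ha : ∀ x ∈ X₀, χ x ≤ 0)
    (hb : ∀ x ∈ D, fderiv ℝ χ x (f x) - ψ₁ (χ x) ≤ 0)
    (hc1 : ∀ θ : ℝ → ℝ, (∀ t, AnalyticAt ℝ θ t) →
      (∀ t ≥ (0:ℝ), deriv θ t = ψ₁ (θ t)) → θ 0 ≤ 0 →
      ∀ ξ > (0:ℝ), θ ξ ≤ 0)
    (hc2 : ∀ c ≤ (0:ℝ), ∃ θ : ℝ → ℝ, (∀ t, AnalyticAt ℝ θ t) ∧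
      (∀ t ≥ (0:ℝ), deriv θ t = ψ₁ (θ t)) ∧ θ 0 = c)
    (hd : ∀ x ∈ X₀, φ x ≤ 0)
    (he : ∀ x ∈ D, fderiv ℝ φ x (f x) - ψ₂ (φ x) - δ x * χ x ≤ 0)
    (hfU : ∀ x ∈ U, 0 < φ x)
    (hg1 : ∀ θ : ℝ → ℝ, (∀ t, AnalyticAt ℝ θ t) →
      (∀ t ≥ (0:ℝ), deriv θ t = ψ₂ (θ t)) → θ 0 ≤ 0 →
      ∀ ξ > (0:ℝ), θ ξ ≤ 0)
    (hg2 : ∀ c ≤ (0:ℝ), ∃ θ : ℝ → ℝ, (∀ t, AnalyticAt ℝ θ t) ∧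
      (∀ t ≥ (0:ℝ), deriv θ t = ψ₂ (θ t)) ∧ θ 0 = c) :
    ∀ x : ℝ → (Fin n → ℝ),
      (∀ t ≥ (0:ℝ), HasDerivAt x (f (x t)) t) →
      x 0 ∈ X₀ → (∀ t ≥ (0:ℝ), x t ∈ D) →
      ∀ t ≥ (0:ℝ), x t ∉ U :=
  combined_barrier_certificate_general f D X₀ U χ φ ψ₁ ψ₂ δ hχa hφa hψ₁a hψ₂a hδ ha hb hc1 hc2 hd he
    hfU hg1 hg2
end

section
/- Let Q be a finite set of modes. For each q ∈ Q let f_q : ℝⁿ → ℝⁿ be an analytic vector field, D_q ⊆ ℝⁿ a mode domain, Ξ_q ⊆ ℝⁿ an initial set and Sᵘ_q ⊆ ℝⁿ an unsafe set. Let E ⊆ Q × Q be a set of discrete transitions, with guard G_e ⊆ ℝⁿ and reset map R_e : ℝⁿ → ℝⁿ for each e ∈ E. Suppose there are nonnegative reals c_e (e ∈ E) and analytic functions φ_q : ℝⁿ → ℝ and ψ_q : ℝ → ℝ (q ∈ Q) such that: (5) for all q ∈ Q and x ∈ Ξ_q, φ_q(x) ≤ 0; (6) for all q ∈ Q and x ∈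 D_q, L_{f_q} φ_q(x) − ψ_q(φ_q(x)) ≤ 0; (7) for all q ∈ Q and x ∈ Sᵘ_q, φ_q(x) > 0; (8) for each q ∈ Q, every analytic θ : [0,∞) → ℝ with θ′(t) = ψ_q(θ(t)) for all t ≥ 0 and θ(0) ≤ 0 satisfies θ(ξ) ≤ 0 for all ξ > 0, and for every c ≤ 0 such a solution with θ(0) = c exists; (9) for every e = (q,q′) ∈ E and every x ∈ G_e, c_e · φ_q(x) − φ_{q′}(R_e(x)) ≥ 0. Then for every hybrid execution, i.e., every finite sequence (q₀,x₀),…,(q_l,x_l) with x₀ ∈ Ξ_{q₀} such that each consecutive pair is related either by a discrete jump (e = (q_i,q_{i+1}) ∈ E, x_i ∈ G_e, x_{i+1} = R_e(x_i)) or by a continuous evolution (q_i = q_{i+1} and there exist δ ≥ 0 and a differentiable x : [0,δ] → ℝⁿ with x(0) = x_i, x(δ) = x_{i+1}, x′(t) = f_{q_i}(x(t)) and x(t) ∈ D_{q_i} for all t ∈ [0,δ]), one has φ_{q_l}(x_l) ≤ 0; in particular x_l ∉ Sᵘ_{q_l}. -/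
open Set Filter
open scoped Topology NNReal

/-- Comparison lemma: if `g` satisfies `g' ≤ ψ ∘ g` on `[0, δ]`, `θ` solves
`θ' = ψ ∘ θ` on `[0, ∞)`, `ψ` is analytic (hence locally Lipschitz), and
`g 0 ≤ θ 0`, then `g δ ≤ θ δ`. -/
lemma barrier_comparison {ψ : ℝ → ℝ} (hψ : ∀ y, AnalyticAt ℝ ψ y)
    {δ : ℝ} (hδ : 0 ≤ δ) {g g' θ : ℝ → ℝ}
    (hg : ∀ t ∈ Icc (0:ℝ) δ, HasDerivAt g (g' t) t)
    (hgb : ∀ t ∈ Icc (0:ℝ) δ, g' t ≤ ψ (g t))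
    (hθa : ∀ t, AnalyticAt ℝ θ t)
    (hθd : ∀ t ≥ (0:ℝ), deriv θ t = ψ (θ t))
    (h0 : g 0 ≤ θ 0) : g δ ≤ θ δ := by
  -- θ has derivative ψ (θ t) everywhere for t ≥ 0
  have hθder : ∀ t ≥ (0:ℝ), HasDerivAt θ (ψ (θ t)) t := by
    intro t ht
    have := (hθa t).differentiableAt.hasDerivAt
    rwa [hθd t ht] at this
  have hθcont : Continuous θ := by
    apply continuous_iff_continuousAt.mpr
    exact fun t => (hθa t).continuousAt
  have hgcont : ContinuousOn g (Icc 0 δ) :=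
    fun t ht => (hg t ht).continuousAt.continuousWithinAt
  -- bound the values of g and θ on [0, δ]
  have hcomp : IsCompact (Icc (0:ℝ) δ) := isCompact_Icc
  obtain ⟨C₁, hC₁⟩ := hcomp.exists_bound_of_continuousOn hgcont
  obtain ⟨C₂, hC₂⟩ := hcomp.exists_bound_of_continuousOn hθcont.continuousOn
  set M : ℝ := max C₁ C₂ with hM
  have hgM : ∀ t ∈ Icc (0:ℝ) δ, g t ∈ Icc (-M) M := by
    intro t ht
    have h := hC₁ t ht
    rw [Real.norm_eq_abs, abs_le] at h
    exact ⟨by simp only [hM]; linarith [h.1, le_max_left C₁ C₂],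
      by simp only [hM]; linarith [h.2, le_max_left C₁ C₂]⟩
  have hθM : ∀ t ∈ Icc (0:ℝ) δ, θ t ∈ Icc (-M) M := by
    intro t ht
    have h := hC₂ t ht
    rw [Real.norm_eq_abs, abs_le] at h
    exact ⟨by simp only [hM]; linarith [h.1, le_max_right C₁ C₂],
      by simp only [hM]; linarith [h.2, le_max_right C₁ C₂]⟩
  -- ψ is Lipschitz on [-M, M]
  have hψcd : ContDiff ℝ 1 ψ := contDiff_iff_contDiffAt.mpr fun y => (hψ y).contDiffAt
  have hψd : Differentiable ℝ ψ := fun y => (hψ y).differentiableAt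
  have hderc : Continuous (deriv ψ) := hψcd.continuous_deriv le_rfl
  obtain ⟨C₃, hC₃⟩ := (isCompact_Icc (a := -M) (b := M)).exists_bound_of_continuousOn
    hderc.continuousOn
  set K : ℝ≥0 := C₃.toNNReal with hK
  have hLip : LipschitzOnWith K ψ (Icc (-M) M) := by
    apply Convex.lipschitzOnWith_of_nnnorm_hasFDerivWithin_le
      (f' := fun y => ContinuousLinearMap.smulRight (1 : ℝ →L[ℝ] ℝ) (deriv ψ y))
      (fun y _ => ((hψd y).hasDerivAt.hasFDerivAt).hasFDerivWithinAt)
      (fun y hy => ?_) (convex_Icc _ _)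
    have h1 : ‖ContinuousLinearMap.smulRight (1 : ℝ →L[ℝ] ℝ) (deriv ψ y)‖₊
        = ‖deriv ψ y‖₊ := by
      simp
    rw [h1, ← NNReal.coe_le_coe, coe_nnnorm, Real.coe_toNNReal']
    exact le_max_of_le_left (hC₃ y hy)
  have hKnn : (0:ℝ) ≤ (K:ℝ) := K.coe_nonneg
  -- Lipschitz inequality in the needed one-sided form
  have hlipineq : ∀ t ∈ Icc (0:ℝ) δ, θ t ≤ g t →
      ψ (g t) - ψ (θ t) ≤ (K:ℝ) * (g t - θ t) := by
    intro t ht hle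
    have h := hLip.dist_le_mul _ (hgM t ht) _ (hθM t ht)
    rw [Real.dist_eq, Real.dist_eq] at h
    have h1 : ψ (g t) - ψ (θ t) ≤ |ψ (g t) - ψ (θ t)| := le_abs_self _
    have h2 : |g t - θ t| = g t - θ t := abs_of_nonneg (by linarith)
    rw [h2] at h
    linarith
  -- apply Grönwall to F = max (g - θ) 0
  set F : ℝ → ℝ := fun t => max (g t - θ t) 0 with hFdef
  set F' : ℝ → ℝ := fun t => if g t ≤ θ t then 0 else (K:ℝ) * (g t - θ t) with hF'def
  have hF'nn : ∀ t, 0 ≤ F' t := by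
    intro t
    simp only [hF'def]
    split_ifs with h
    · exact le_refl 0
    · push_neg at h
      have : 0 ≤ g t - θ t := by linarith
      positivity
  have hFcont : ContinuousOn F (Icc 0 δ) := fun t ht =>
    ((hgcont t ht).sub (hθcont.continuousOn t ht)).max
      (continuousWithinAt_const (b := (0:ℝ)))
  have hslope : ∀ x ∈ Ico (0:ℝ) δ, ∀ r, F' x < r →
      ∃ᶠ z in 𝓝[>] x, (z - x)⁻¹ * (F z - F x) < r := by
    intro x hx r hr
    have hxIcc : x ∈ Icc (0:ℝ) δ := Ico_subset_Icc_self hx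
    have hrpos : 0 < r := lt_of_le_of_lt (hF'nn x) hr
    by_cases hc : g x < θ x
    · -- locally F = 0 to the right of x
      have hmem : Ioo x δ ∈ 𝓝[>] x := Ioo_mem_nhdsGT_of_mem ⟨le_refl x, hx.2⟩
      have hsub : 𝓝[>] x ≤ 𝓝[Icc (0:ℝ) δ] x := by
        apply nhdsWithin_le_of_mem
        filter_upwards [self_mem_nhdsWithin, hmem] with z hz1 hz2
        exact ⟨le_of_lt (lt_of_le_of_lt hx.1 hz2.1), le_of_lt hz2.2⟩
      have hcw : Tendsto (fun z => g z - θ z) (𝓝[>] x) (𝓝 (g x - θ x)) :=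
        ((hgcont.sub hθcont.continuousOn) x hxIcc).tendsto.mono_left hsub
      have hev : ∀ᶠ z in 𝓝[>] x, g z - θ z < 0 :=
        hcw.eventually (eventually_lt_nhds (by linarith : g x - θ x < (0:ℝ)))
      apply Filter.Eventually.frequently
      filter_upwards [hev] with z hz
      have hFz : F z = 0 := max_eq_right (le_of_lt hz)
      have hFx : F x = 0 := max_eq_right (by linarith)
      rw [hFz, hFx]
      simpa using hrpos
    · -- g x ≥ θ x : use the derivative of h = g - θ
      push_neg at hc
      have hd : HasDerivAt (fun z => g z - θ z) (g' x - ψ (θ x)) x :=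
        (hg x hxIcc).sub (hθder x hx.1)
      have hdle : g' x - ψ (θ x) ≤ F' x := by
        have h1 : g' x ≤ ψ (g x) := hgb x hxIcc
        have h2 : ψ (g x) - ψ (θ x) ≤ (K:ℝ) * (g x - θ x) := hlipineq x hxIcc hc
        simp only [hF'def]
        split_ifs with h
        · have hgx : g x = θ x := le_antisymm h hc
          rw [hgx] at h1
          linarith
        · linarith
      have hslopeh : Tendsto (fun z => (z - x)⁻¹ * ((g z - θ z) - (g x - θ x)))
          (𝓝[>] x) (𝓝 (g' x - ψ (θ x))) := by
        have := (hasDerivWithinAt_iff_tendsto_slope.mp (hd.hasDerivWithinAt (s := Ioi x)))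
        have heq : Ioi x \ {x} = Ioi x :=
          diff_singleton_eq_self (fun h => lt_irrefl x h)
        rw [heq] at this
        apply this.congr
        intro z
        simp [slope_def_field, div_eq_inv_mul]
      have hev : ∀ᶠ z in 𝓝[>] x,
          (z - x)⁻¹ * ((g z - θ z) - (g x - θ x)) < r :=
        hslopeh.eventually (eventually_lt_nhds (lt_of_le_of_lt hdle hr))
      apply Filter.Eventually.frequently
      filter_upwards [hev, self_mem_nhdsWithin] with z hz hz2
      have hzx : 0 < z - x := sub_pos.mpr hz2
      have hFx : F x = g x - θ x := max_eq_left (by linarith)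
      have hkey : F z - F x ≤ (g z - θ z) - (g x - θ x) ∨ F z - F x ≤ 0 := by
        rcases le_or_gt 0 (g z - θ z) with h | h
        · left; rw [hFx]; simp only [hFdef]; rw [max_eq_left h]
        · right
          have : F z = 0 := max_eq_right (le_of_lt h)
          rw [this, hFx]; linarith
      rcases hkey with h | h
      · calc (z - x)⁻¹ * (F z - F x) ≤ (z - x)⁻¹ * ((g z - θ z) - (g x - θ x)) := by
              apply mul_le_mul_of_nonneg_left h (le_of_lt (inv_pos.mpr hzx))
          _ < r := hz
      · calc (z - x)⁻¹ * (F z - F x) ≤ 0 :=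
              mul_nonpos_of_nonneg_of_nonpos (le_of_lt (inv_pos.mpr hzx)) h
          _ < r := hrpos
  have hbound : ∀ x ∈ Ico (0:ℝ) δ, F' x ≤ (K:ℝ) * F x + 0 := by
    intro x hx
    simp only [hF'def, hFdef]
    split_ifs with h
    · have : 0 ≤ max (g x - θ x) 0 := le_max_right _ _
      nlinarith
    · push_neg at h
      rw [max_eq_left (by linarith)]
      linarith
  have hF0 : F 0 ≤ 0 := max_le (by linarith) le_rfl
  have := le_gronwallBound_of_liminf_deriv_right_le (δ := 0) (K := (K:ℝ)) (ε := 0)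
    hFcont hslope hF0 hbound δ ⟨hδ, le_refl δ⟩
  rw [gronwallBound_ε0_δ0] at this
  have : F δ ≤ 0 := this
  have := le_max_left (g δ - θ δ) 0
  simp only [hFdef] at *
  linarith [le_trans (le_max_left (g δ - θ δ) 0) ‹max (g δ - θ δ) 0 ≤ 0›]

/-- Barrier certificates for hybrid systems: given a hybrid automaton with
modes `Q`, vector fields `f q`, mode domains `D q`, initial sets `Ξ q`,
unsafe sets `Su q`, transitions `E` with guards `G e` and resets `R e`,
if the family `φ q` satisfies the relaxed barrier conditions (5)–(9),
then at the end of every hybrid execution `(q₀,x₀),…,(q_l,x_l)` one has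
`φ (q_l) (x_l) ≤ 0`, in particular `x_l ∉ Su (q_l)`. -/
theorem hybrid_barrier_certificate {n : ℕ} (Q : Type*) [Fintype Q]
    (f : Q → (Fin n → ℝ) → (Fin n → ℝ))
    (D Ξ Su : Q → Set (Fin n → ℝ))
    (E : Set (Q × Q))
    (G : Q × Q → Set (Fin n → ℝ))
    (R : Q × Q → (Fin n → ℝ) → (Fin n → ℝ))
    (c : Q × Q → ℝ)
    (φ : Q → (Fin n → ℝ) → ℝ) (ψ : Q → ℝ → ℝ)
    (hf : ∀ q x, AnalyticAt ℝ (f q) x)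
    (hφa : ∀ q x, AnalyticAt ℝ (φ q) x)
    (hψa : ∀ q y, AnalyticAt ℝ (ψ q) y)
    (hc : ∀ e ∈ E, 0 ≤ c e)
    (h5 : ∀ q, ∀ x ∈ Ξ q, φ q x ≤ 0)
    (h6 : ∀ q, ∀ x ∈ D q, fderiv ℝ (φ q) x (f q x) - ψ q (φ q x) ≤ 0)
    (h7 : ∀ q, ∀ x ∈ Su q, 0 < φ q x)
    (h8a : ∀ q, ∀ θ : ℝ → ℝ, (∀ t, AnalyticAt ℝ θ t) →
      (∀ t ≥ (0:ℝ), deriv θ t = ψ q (θ t)) → θ 0 ≤ 0 →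
      ∀ ξ > (0:ℝ), θ ξ ≤ 0)
    (h8b : ∀ q, ∀ c₀ ≤ (0:ℝ), ∃ θ : ℝ → ℝ, (∀ t, AnalyticAt ℝ θ t) ∧
      (∀ t ≥ (0:ℝ), deriv θ t = ψ q (θ t)) ∧ θ 0 = c₀)
    (h9 : ∀ e ∈ E, ∀ x ∈ G e, 0 ≤ c e * φ e.1 x - φ e.2 (R e x)) :
    ∀ (l : ℕ) (q : Fin (l + 1) → Q) (xs : Fin (l + 1) → (Fin n → ℝ)),
      xs 0 ∈ Ξ (q 0) →
      (∀ i : Fin l,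
        -- discrete jump
        ((q i.castSucc, q i.succ) ∈ E ∧
          xs i.castSucc ∈ G (q i.castSucc, q i.succ) ∧
          xs i.succ = R (q i.castSucc, q i.succ) (xs i.castSucc)) ∨
        -- continuous evolution
        (q i.castSucc = q i.succ ∧
          ∃ (δ : ℝ) (x : ℝ → (Fin n → ℝ)), 0 ≤ δ ∧
            x 0 = xs i.castSucc ∧ x δ = xs i.succ ∧
            (∀ t ∈ Set.Icc (0:ℝ) δ,
              HasDerivAt x (f (q i.castSucc) (x t)) t ∧
              x t ∈ D (q i.castSucc)))) →
      φ (q (Fin.last l)) (xs (Fin.last l)) ≤ 0 ∧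
        xs (Fin.last l) ∉ Su (q (Fin.last l)) := by
  intro l q xs hinit hstep
  have key : ∀ i : Fin (l + 1), φ (q i) (xs i) ≤ 0 := by
    intro i
    induction i using Fin.induction with
    | zero => exact h5 _ _ hinit
    | succ i ih =>
      rcases hstep i with ⟨hE, hG, hR⟩ | ⟨hq, δ, x, hδ, hx0, hxδ, hsol⟩
      · -- discrete jump
        have h9' := h9 _ hE _ hG
        have hc' := hc _ hE
        have : c (q i.castSucc, q i.succ) * φ (q i.castSucc) (xs i.castSucc) ≤ 0 :=
          mul_nonpos_of_nonneg_of_nonpos hc' ih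
        rw [hR]
        simp only at h9' ⊢
        linarith
      · -- continuous evolution
        set qq := q i.castSucc with hqq
        set g : ℝ → ℝ := fun t => φ qq (x t) with hgdef
        set g' : ℝ → ℝ := fun t => fderiv ℝ (φ qq) (x t) (f qq (x t)) with hg'def
        have hg : ∀ t ∈ Icc (0:ℝ) δ, HasDerivAt g (g' t) t := by
          intro t ht
          exact ((hφa qq (x t)).differentiableAt.hasFDerivAt).comp_hasDerivAt t (hsol t ht).1
        have hgb : ∀ t ∈ Icc (0:ℝ) δ, g' t ≤ ψ qq (g t) := by
          intro t ht
          have := h6 qq _ (hsol t ht).2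
          simp only [hgdef, hg'def]
          linarith
        have hg0 : g 0 = φ qq (xs i.castSucc) := by rw [hgdef]; simp [hx0]
        obtain ⟨θ, hθa, hθd, hθ0⟩ := h8b qq (φ qq (xs i.castSucc)) ih
        have hcmp : g δ ≤ θ δ :=
          barrier_comparison (hψa qq) hδ hg hgb hθa hθd (by rw [hg0, hθ0])
        have hθδ : θ δ ≤ 0 := by
          rcases eq_or_lt_of_le hδ with h | h
          · rw [← h, hθ0]; exact ih
          · exact h8a qq θ hθa hθd (by rw [hθ0]; exact ih) δ h
        have : φ (q i.succ) (xs i.succ) = g δ := by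
          rw [← hq, ← hxδ]
        rw [this]
        linarith
  refine ⟨key (Fin.last l), fun hmem => ?_⟩
  exact absurd (h7 _ _ hmem) (not_lt.2 (key (Fin.last l)))
end

section
/- Let Q be a finite set of modes, f_q : ℝⁿ → ℝⁿ analytic vector fields, D_q, Ξ_q, Sᵘ_q ⊆ ℝⁿ, and E ⊆ Q × Q transitions with guards G_e ⊆ ℝⁿ and resets R_e : ℝⁿ → ℝⁿ. Suppose there are nonnegative reals c_{e,1}, c_{e,2}, c_{e,3}, c_{e,4} (e ∈ E), polynomials δ_q with δ_q(x) ≥ 0 for all x, and analytic functions φ_q, χ_q : ℝⁿ → ℝ and ψ_{q,1}, ψ_{q,2} : ℝ → ℝ such that for all q ∈ Q: χ_q(x) ≤ 0 and φ_q(x) ≤ 0 for all x ∈ Ξ_q; L_{f_q} χ_q(x) − ψ_{q,1}(χ_q(x)) ≤ 0 and L_{f_q} φ_q(x) − ψ_{q,2}(φ_q(x)) − δ_q(x)·χ_q(x) ≤ 0 for all x ∈ D_q; φ_q(x) > 0 for all x ∈ Sᵘ_q; for i = 1, 2, every analytic θ : [0,∞) → ℝ with θ′(t) = ψ_{q,i}(θ(t))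 for all t ≥ 0 and θ(0) ≤ 0 satisfies θ(ξ) ≤ 0 for all ξ > 0, and for every c ≤ 0 such a solution with θ(0) = c exists; and for every e = (q,q′) ∈ E and x ∈ G_e: c_{e,1}·φ_q(x) − φ_{q′}(R_e(x)) ≥ 0, c_{e,2}·φ_q(x) − χ_{q′}(R_e(x)) ≥ 0, c_{e,3}·χ_q(x) − φ_{q′}(R_e(x)) ≥ 0 and c_{e,4}·χ_q(x) − χ_{q′}(R_e(x)) ≥ 0. Then for every finite hybrid execution (q₀,x₀),…,(q_l,x_l) with x₀ ∈ Ξ_{q₀}, where each step is either a discrete jump (e = (q_i,q_{i+1}) ∈ E, x_i ∈ G_e, x_{i+1} = R_e(x_i)) or a continuous evolution (q_i = q_{i+1} and there exist δ ≥ 0 and differentiable x : [0,δ] → ℝⁿ with x(0) = x_i, x(δ) = x_{i+1}, x′(t) = f_{q_i}(x(t)), x(t) ∈ D_{q_i} for all t ∈ [0,δ]), one has x_l ∉ Sᵘ_{q_l}. -/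
/-!
Along a flow, `χ` is a subsolution of `y' = ψ₁ y`; comparing it with the solution of that
ODE started at the same nonpositive value (a fencing argument, which needs `ψ₁` locally
Lipschitz) keeps `χ ≤ 0`. Then `δ χ ≤ 0` because `δ ≥ 0`, so `φ` is a subsolution of
`y' = ψ₂ y` and stays nonpositive as well. A jump keeps both nonpositive since the new values
are bounded by nonnegative multiples of the old `φ`. Hence `φ ≤ 0` along every execution,
while `φ > 0` on the unsafe sets.
-/

open Set Real Metric
open scoped NNReal

def HasNonposForwardSolutions (ψ : ℝ → ℝ) : Prop :=
  ∀ c ≤ (0 : ℝ), ∃ θ : ℝ → ℝ, θ 0 = c ∧ (∀ t ≥ (0 : ℝ), HasDerivAt θ (ψ (θ t)) t) ∧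
    ∀ t ≥ (0 : ℝ), θ t ≤ 0

section Comparison

variable {ψ g g' θ : ℝ → ℝ} {a b : ℝ}

theorem subsolution_le_solution_of_lipschitz_above {K : ℝ≥0} {r : ℝ} (hr : 0 < r)
    (hψ : ∀ t ∈ Ico a b, ∀ u ∈ Ioc 0 r, ψ (θ t + u) ≤ ψ (θ t) + K * u)
    (hg : ContinuousOn g (Icc a b)) (hg' : ∀ t ∈ Ico a b, HasDerivWithinAt g (g' t) (Ici t) t)
    (hgψ : ∀ t ∈ Ico a b, g' t ≤ ψ (g t))
    (hθ : ContinuousOn θ (Icc a b))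
    (hθ' : ∀ t ∈ Ico a b, HasDerivWithinAt θ (ψ (θ t)) (Ici t) t)
    (ha : g a ≤ θ a) : ∀ t ∈ Icc a b, g t ≤ θ t := by
  set L : ℝ := K + 1
  have hL : 0 < L := by positivity
  have decay : ∀ t ≤ b, exp (L * (t - b)) ≤ 1 := fun t ht =>
    exp_le_one_iff.2 (mul_nonpos_of_nonneg_of_nonpos hL.le (sub_nonpos.2 ht))
  -- the barrier `θ + c e^{L (t - b)}` grows strictly faster than any subsolution touching it
  have fence : ∀ c ∈ Ioc 0 r, ∀ t ∈ Icc a b, g t ≤ θ t + c * exp (L * (t - b)) := by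
    intro c hc
    have hE : ∀ t, HasDerivAt (fun t => c * exp (L * (t - b))) (c * exp (L * (t - b)) * L) t :=
      fun t => by
        simpa [mul_assoc] using
          (((hasDerivAt_id t).sub_const b).const_mul L).exp.const_mul c
    refine image_le_of_deriv_right_lt_deriv_boundary' hg hg' ?_
      (hθ.add (continuous_iff_continuousAt.2 fun t => (hE t).continuousAt).continuousOn)
      (fun t ht => (hθ' t ht).add (hE t).hasDerivWithinAt) ?_
    · have : 0 < c * exp (L * (a - b)) := by positivity [hc.1]
      linarith
    · intro t ht hgt
      set u := c * exp (L * (t - b))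
      have hu : u ∈ Ioc 0 r :=
        ⟨by positivity [hc.1], (mul_le_of_le_one_right hc.1.le (decay t ht.2.le)).trans hc.2⟩
      calc g' t ≤ ψ (g t) := hgψ t ht
        _ = ψ (θ t + u) := by rw [hgt]
        _ ≤ ψ (θ t) + K * u := hψ t ht u hu
        _ < ψ (θ t) + u * L := by nlinarith [hu.1]
  intro t ht
  refine le_of_forall_pos_le_add fun η hη => ?_
  have hbarrier := fence (min r η) ⟨lt_min hr hη, min_le_left _ _⟩ t ht
  have hsmall : min r η * exp (L * (t - b)) ≤ η :=
    (mul_le_of_le_one_right (lt_min hr hη).le (decay t ht.2)).trans (min_le_right _ _)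
  linarith

theorem subsolution_le_solution_of_locallyLipschitz (hψ : LocallyLipschitz ψ)
    (hg : ContinuousOn g (Icc a b)) (hg' : ∀ t ∈ Ico a b, HasDerivWithinAt g (g' t) (Ici t) t)
    (hgψ : ∀ t ∈ Ico a b, g' t ≤ ψ (g t))
    (hθ : ContinuousOn θ (Icc a b))
    (hθ' : ∀ t ∈ Ico a b, HasDerivWithinAt θ (ψ (θ t)) (Ici t) t)
    (ha : g a ≤ θ a) : ∀ t ∈ Icc a b, g t ≤ θ t := by
  obtain ⟨K, hK⟩ := (hψ.locallyLipschitzOn (s := cthickening 1 (θ '' Icc a b)))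
    |>.exists_lipschitzOnWith_of_compact (isCompact_Icc.image_of_continuousOn hθ).cthickening
  refine subsolution_le_solution_of_lipschitz_above (K := K) one_pos (fun t ht u hu => ?_)
    hg hg' hgψ hθ hθ' ha
  have hθt : θ t ∈ θ '' Icc a b := mem_image_of_mem θ (Ico_subset_Icc_self ht)
  have hdist : dist (θ t + u) (θ t) = u := by
    rw [dist_eq, add_sub_cancel_left, abs_of_pos hu.1]
  have hlip := hK.dist_le_mul _ (mem_cthickening_of_dist_le _ _ _ _ hθt (hdist.trans_le hu.2))
    _ (self_subset_cthickening _ hθt)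
  rw [hdist, dist_eq] at hlip
  linarith [le_abs_self (ψ (θ t + u) - ψ (θ t))]

theorem hasNonposForwardSolutions_of_analytic
    (hstay : ∀ θ : ℝ → ℝ, (∀ t, AnalyticAt ℝ θ t) →
      (∀ t ≥ (0:ℝ), deriv θ t = ψ (θ t)) → θ 0 ≤ 0 → ∀ ξ > (0:ℝ), θ ξ ≤ 0)
    (hexists : ∀ c₀ ≤ (0:ℝ), ∃ θ : ℝ → ℝ, (∀ t, AnalyticAt ℝ θ t) ∧
      (∀ t ≥ (0:ℝ), deriv θ t = ψ (θ t)) ∧ θ 0 = c₀) :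
    HasNonposForwardSolutions ψ := by
  intro c hc
  obtain ⟨θ, hθa, hθ', hθ0⟩ := hexists c hc
  refine ⟨θ, hθ0, fun t ht => hθ' t ht ▸ (hθa t).differentiableAt.hasDerivAt, fun t ht => ?_⟩
  rcases ht.eq_or_lt with rfl | ht
  · exact hθ0 ▸ hc
  · exact hstay θ hθa hθ' (hθ0 ▸ hc) t ht

theorem HasNonposForwardSolutions.nonpos_of_subsolution
    (hsol : HasNonposForwardSolutions ψ) (hψ : LocallyLipschitz ψ) {d : ℝ}
    (hg : ∀ t ∈ Icc 0 d, HasDerivAt g (g' t) t) (hgψ : ∀ t ∈ Icc 0 d, g' t ≤ ψ (g t))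
    (h0 : g 0 ≤ 0) : ∀ t ∈ Icc 0 d, g t ≤ 0 := by
  obtain ⟨θ, hθ0, hθ', hθ⟩ := hsol (g 0) h0
  intro t ht
  refine (subsolution_le_solution_of_locallyLipschitz hψ
    (fun s hs => (hg s hs).continuousAt.continuousWithinAt)
    (fun s hs => (hg s (Ico_subset_Icc_self hs)).hasDerivWithinAt)
    (fun s hs => hgψ s (Ico_subset_Icc_self hs))
    (fun s hs => (hθ' s hs.1).continuousAt.continuousWithinAt)
    (fun s hs => (hθ' s hs.1).hasDerivWithinAt) hθ0.ge t ht).trans (hθ t ht.1)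

end Comparison

theorem combined_barrier_nonpos_along_flow {E : Type*} [NormedAddCommGroup E] [NormedSpace ℝ E]
    {f : E → E} {D : Set E} {χ φ δ : E → ℝ} {ψ₁ ψ₂ : ℝ → ℝ}
    (hχ : Differentiable ℝ χ) (hφ : Differentiable ℝ φ)
    (hψ₁ : LocallyLipschitz ψ₁) (hψ₂ : LocallyLipschitz ψ₂)
    (hsol₁ : HasNonposForwardSolutions ψ₁) (hsol₂ : HasNonposForwardSolutions ψ₂)
    (hδ : ∀ x ∈ D, 0 ≤ δ x)
    (hχD : ∀ x ∈ D, fderiv ℝ χ x (f x) ≤ ψ₁ (χ x))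
    (hφD : ∀ x ∈ D, fderiv ℝ φ x (f x) ≤ ψ₂ (φ x) + δ x * χ x)
    {x : ℝ → E} {d : ℝ} (hx : ∀ t ∈ Icc 0 d, HasDerivAt x (f (x t)) t ∧ x t ∈ D)
    (hχ0 : χ (x 0) ≤ 0) (hφ0 : φ (x 0) ≤ 0) :
    ∀ t ∈ Icc 0 d, χ (x t) ≤ 0 ∧ φ (x t) ≤ 0 := by
  have hderiv : ∀ V : E → ℝ, Differentiable ℝ V →
      ∀ t ∈ Icc 0 d, HasDerivAt (V ∘ x) (fderiv ℝ V (x t) (f (x t))) t :=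
    fun V hV t ht => (hV (x t)).hasFDerivAt.comp_hasDerivAt t (hx t ht).1
  have hχx := hsol₁.nonpos_of_subsolution hψ₁ (hderiv χ hχ)
    (fun t ht => hχD _ (hx t ht).2) hχ0
  have hφx := hsol₂.nonpos_of_subsolution hψ₂ (hderiv φ hφ)
    (fun t ht => (hφD _ (hx t ht).2).trans <| add_le_of_nonpos_right <|
      mul_nonpos_of_nonneg_of_nonpos (hδ _ (hx t ht).2) (hχx t ht)) hφ0
  exact fun t ht => ⟨hχx t ht, hφx t ht⟩

theorem hybrid_combined_barrier_certificate_general {n : ℕ} (Q : Type*)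
    (f : Q → (Fin n → ℝ) → (Fin n → ℝ))
    (D Ξ Su : Q → Set (Fin n → ℝ))
    (E : Set (Q × Q))
    (G : Q × Q → Set (Fin n → ℝ))
    (R : Q × Q → (Fin n → ℝ) → (Fin n → ℝ))
    (c₁ c₂ : Q × Q → ℝ)
    (δ : Q → (Fin n → ℝ) → ℝ)
    (φ χ : Q → (Fin n → ℝ) → ℝ) (ψ₁ ψ₂ : Q → ℝ → ℝ)
    (hφa : ∀ q x, AnalyticAt ℝ (φ q) x)
    (hχa : ∀ q x, AnalyticAt ℝ (χ q) x)
    (hψ₁a : ∀ q y, AnalyticAt ℝ (ψ₁ q) y)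
    (hψ₂a : ∀ q y, AnalyticAt ℝ (ψ₂ q) y)
    (hc₁ : ∀ e ∈ E, 0 ≤ c₁ e) (hc₂ : ∀ e ∈ E, 0 ≤ c₂ e)
    (hδ : ∀ q x, 0 ≤ δ q x)
    (hχ0 : ∀ q, ∀ x ∈ Ξ q, χ q x ≤ 0)
    (hφ0 : ∀ q, ∀ x ∈ Ξ q, φ q x ≤ 0)
    (hχD : ∀ q, ∀ x ∈ D q, fderiv ℝ (χ q) x (f q x) - ψ₁ q (χ q x) ≤ 0)
    (hφD : ∀ q, ∀ x ∈ D q,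
      fderiv ℝ (φ q) x (f q x) - ψ₂ q (φ q x) - δ q x * χ q x ≤ 0)
    (hU : ∀ q, ∀ x ∈ Su q, 0 < φ q x)
    (hcmp1a : ∀ q, ∀ θ : ℝ → ℝ, (∀ t, AnalyticAt ℝ θ t) →
      (∀ t ≥ (0:ℝ), deriv θ t = ψ₁ q (θ t)) → θ 0 ≤ 0 →
      ∀ ξ > (0:ℝ), θ ξ ≤ 0)
    (hcmp1b : ∀ q, ∀ c₀ ≤ (0:ℝ), ∃ θ : ℝ → ℝ, (∀ t, AnalyticAt ℝ θ t) ∧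
      (∀ t ≥ (0:ℝ), deriv θ t = ψ₁ q (θ t)) ∧ θ 0 = c₀)
    (hcmp2a : ∀ q, ∀ θ : ℝ → ℝ, (∀ t, AnalyticAt ℝ θ t) →
      (∀ t ≥ (0:ℝ), deriv θ t = ψ₂ q (θ t)) → θ 0 ≤ 0 →
      ∀ ξ > (0:ℝ), θ ξ ≤ 0)
    (hcmp2b : ∀ q, ∀ c₀ ≤ (0:ℝ), ∃ θ : ℝ → ℝ, (∀ t, AnalyticAt ℝ θ t) ∧
      (∀ t ≥ (0:ℝ), deriv θ t = ψ₂ q (θ t)) ∧ θ 0 = c₀)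
    (hjump1 : ∀ e ∈ E, ∀ x ∈ G e, 0 ≤ c₁ e * φ e.1 x - φ e.2 (R e x))
    (hjump2 : ∀ e ∈ E, ∀ x ∈ G e, 0 ≤ c₂ e * φ e.1 x - χ e.2 (R e x)) :
    ∀ (l : ℕ) (q : Fin (l + 1) → Q) (xs : Fin (l + 1) → (Fin n → ℝ)),
      xs 0 ∈ Ξ (q 0) →
      (∀ i : Fin l,
        -- discrete jump
        ((q i.castSucc, q i.succ) ∈ E ∧
          xs i.castSucc ∈ G (q i.castSucc, q i.succ) ∧
          xs i.succ = R (q i.castSucc, q i.succ) (xs i.castSucc)) ∨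
        -- continuous evolution
        (q i.castSucc = q i.succ ∧
          ∃ (d : ℝ) (x : ℝ → (Fin n → ℝ)), 0 ≤ d ∧
            x 0 = xs i.castSucc ∧ x d = xs i.succ ∧
            (∀ t ∈ Set.Icc (0:ℝ) d,
              HasDerivAt x (f (q i.castSucc) (x t)) t ∧
              x t ∈ D (q i.castSucc)))) →
      xs (Fin.last l) ∉ Su (q (Fin.last l)) := by
  have hψ₁ : ∀ q, LocallyLipschitz (ψ₁ q) := fun q =>
    (contDiff_iff_contDiffAt.2 fun y => (hψ₁a q y).contDiffAt).locallyLipschitz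
  have hψ₂ : ∀ q, LocallyLipschitz (ψ₂ q) := fun q =>
    (contDiff_iff_contDiffAt.2 fun y => (hψ₂a q y).contDiffAt).locallyLipschitz
  intro l q xs hx0 hstep
  have inv : ∀ i, χ (q i) (xs i) ≤ 0 ∧ φ (q i) (xs i) ≤ 0 := by
    intro i
    induction i using Fin.induction with
    | zero => exact ⟨hχ0 _ _ hx0, hφ0 _ _ hx0⟩
    | succ i ih =>
      rcases hstep i with ⟨hE, hG, hR⟩ | ⟨hq, d, x, hd, hstart, hend, hflow⟩
      · rw [hR]
        exact ⟨by nlinarith [hjump2 _ hE _ hG, hc₂ _ hE], by nlinarith [hjump1 _ hE _ hG, hc₁ _ hE]⟩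
      · rw [← hq, ← hend]
        refine combined_barrier_nonpos_along_flow (fun y => (hχa _ y).differentiableAt)
          (fun y => (hφa _ y).differentiableAt) (hψ₁ _) (hψ₂ _)
          (hasNonposForwardSolutions_of_analytic (hcmp1a _) (hcmp1b _))
          (hasNonposForwardSolutions_of_analytic (hcmp2a _) (hcmp2b _)) (fun y _ => hδ _ y)
          (fun y hy => sub_nonpos.1 (hχD _ y hy)) (fun y hy => by linarith [hφD _ y hy])
          hflow (hstart ▸ ih.1) (hstart ▸ ih.2) d ⟨hd, le_rfl⟩
  exact fun hSu => (hU _ _ hSu).not_ge (inv _).2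

/-- Combined barrier certificates for hybrid systems: given a hybrid
automaton with modes `Q`, vector fields `f q`, mode domains `D q`, initial
sets `Ξ q`, unsafe sets `Su q`, transitions `E` with guards `G e` and
resets `R e`, if the families `χ q, φ q` (with comparison functions
`ψ₁ q, ψ₂ q`, nonnegative polynomials `δ q` and nonnegative constants
`c₁ e, c₂ e, c₃ e, c₄ e`) satisfy the combined barrier conditions, then
the final state of every hybrid execution avoids the unsafe set. -/
theorem hybrid_combined_barrier_certificate {n : ℕ} (Q : Type*) [Fintype Q]
    (f : Q → (Fin n → ℝ) → (Fin n → ℝ))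
    (D Ξ Su : Q → Set (Fin n → ℝ))
    (E : Set (Q × Q))
    (G : Q × Q → Set (Fin n → ℝ))
    (R : Q × Q → (Fin n → ℝ) → (Fin n → ℝ))
    (c₁ c₂ c₃ c₄ : Q × Q → ℝ)
    (δ : Q → (Fin n → ℝ) → ℝ)
    (φ χ : Q → (Fin n → ℝ) → ℝ) (ψ₁ ψ₂ : Q → ℝ → ℝ)
    (hf : ∀ q x, AnalyticAt ℝ (f q) x)
    (hφa : ∀ q x, AnalyticAt ℝ (φ q) x)
    (hχa : ∀ q x, AnalyticAt ℝ (χ q) x)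
    (hψ₁a : ∀ q y, AnalyticAt ℝ (ψ₁ q) y)
    (hψ₂a : ∀ q y, AnalyticAt ℝ (ψ₂ q) y)
    (hc₁ : ∀ e ∈ E, 0 ≤ c₁ e) (hc₂ : ∀ e ∈ E, 0 ≤ c₂ e)
    (hc₃ : ∀ e ∈ E, 0 ≤ c₃ e) (hc₄ : ∀ e ∈ E, 0 ≤ c₄ e)
    (hδpoly : ∀ q, ∃ p : MvPolynomial (Fin n) ℝ,
      ∀ x, δ q x = MvPolynomial.eval x p)
    (hδ : ∀ q x, 0 ≤ δ q x)
    (hχ0 : ∀ q, ∀ x ∈ Ξ q, χ q x ≤ 0)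
    (hφ0 : ∀ q, ∀ x ∈ Ξ q, φ q x ≤ 0)
    (hχD : ∀ q, ∀ x ∈ D q, fderiv ℝ (χ q) x (f q x) - ψ₁ q (χ q x) ≤ 0)
    (hφD : ∀ q, ∀ x ∈ D q,
      fderiv ℝ (φ q) x (f q x) - ψ₂ q (φ q x) - δ q x * χ q x ≤ 0)
    (hU : ∀ q, ∀ x ∈ Su q, 0 < φ q x)
    (hcmp1a : ∀ q, ∀ θ : ℝ → ℝ, (∀ t, AnalyticAt ℝ θ t) →
      (∀ t ≥ (0:ℝ), deriv θ t = ψ₁ q (θ t)) → θ 0 ≤ 0 →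
      ∀ ξ > (0:ℝ), θ ξ ≤ 0)
    (hcmp1b : ∀ q, ∀ c₀ ≤ (0:ℝ), ∃ θ : ℝ → ℝ, (∀ t, AnalyticAt ℝ θ t) ∧
      (∀ t ≥ (0:ℝ), deriv θ t = ψ₁ q (θ t)) ∧ θ 0 = c₀)
    (hcmp2a : ∀ q, ∀ θ : ℝ → ℝ, (∀ t, AnalyticAt ℝ θ t) →
      (∀ t ≥ (0:ℝ), deriv θ t = ψ₂ q (θ t)) → θ 0 ≤ 0 →
      ∀ ξ > (0:ℝ), θ ξ ≤ 0)
    (hcmp2b : ∀ q, ∀ c₀ ≤ (0:ℝ), ∃ θ : ℝ → ℝ, (∀ t, AnalyticAt ℝ θ t) ∧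
      (∀ t ≥ (0:ℝ), deriv θ t = ψ₂ q (θ t)) ∧ θ 0 = c₀)
    (hjump1 : ∀ e ∈ E, ∀ x ∈ G e, 0 ≤ c₁ e * φ e.1 x - φ e.2 (R e x))
    (hjump2 : ∀ e ∈ E, ∀ x ∈ G e, 0 ≤ c₂ e * φ e.1 x - χ e.2 (R e x))
    (hjump3 : ∀ e ∈ E, ∀ x ∈ G e, 0 ≤ c₃ e * χ e.1 x - φ e.2 (R e x))
    (hjump4 : ∀ e ∈ E, ∀ x ∈ G e, 0 ≤ c₄ e * χ e.1 x - χ e.2 (R e x)) :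
    ∀ (l : ℕ) (q : Fin (l + 1) → Q) (xs : Fin (l + 1) → (Fin n → ℝ)),
      xs 0 ∈ Ξ (q 0) →
      (∀ i : Fin l,
        -- discrete jump
        ((q i.castSucc, q i.succ) ∈ E ∧
          xs i.castSucc ∈ G (q i.castSucc, q i.succ) ∧
          xs i.succ = R (q i.castSucc, q i.succ) (xs i.castSucc)) ∨
        -- continuous evolution
        (q i.castSucc = q i.succ ∧
          ∃ (d : ℝ) (x : ℝ → (Fin n → ℝ)), 0 ≤ d ∧
            x 0 = xs i.castSucc ∧ x d = xs i.succ ∧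
            (∀ t ∈ Set.Icc (0:ℝ) d,
              HasDerivAt x (f (q i.castSucc) (x t)) t ∧
              x t ∈ D (q i.castSucc)))) →
      xs (Fin.last l) ∉ Su (q (Fin.last l)) :=
  hybrid_combined_barrier_certificate_general Q f D Ξ Su E G R c₁ c₂ δ φ χ ψ₁ ψ₂ hφa hχa hψ₁a hψ₂a
    hc₁ hc₂ hδ hχ0 hφ0 hχD hφD hU hcmp1a hcmp1b hcmp2a hcmp2b hjump1 hjump2
end

section
/- Let α < 0 and β ∈ ℝ. If θ : [0,∞) → ℝ is differentiable with θ′(t) = α·θ(t) + β·θ(t)² for all t ≥ 0 and θ(0) ≤ 0, then θ(ξ) ≤ 0 for all ξ > 0. -/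
/-! The right-hand side factors as `θ′ = (α + β θ) θ`, so `θ` solves a linear equation with the
continuous coefficient `α + β θ(t)`. The integrating factor then gives
`θ(t) = θ(0) · exp (∫₀ᵗ (α + β θ))`, whose sign is that of `θ(0)`. -/

open Set Real

theorem eq_mul_exp_integral_of_hasDerivAt_mul {θ g : ℝ → ℝ} {a t : ℝ} (hg : Continuous g)
    (hθ : ∀ s ≥ a, HasDerivAt θ (g s * θ s) s) (ht : a ≤ t) :
    θ t = θ a * exp (∫ s in a..t, g s) := by
  set G : ℝ → ℝ := fun u => ∫ s in a..u, g s
  have hG : ∀ u, HasDerivAt G (g u) u := fun u => (hg.integral_hasStrictDerivAt a u).hasDerivAt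
  have hderiv : ∀ s ≥ a, HasDerivAt (fun u => θ u * exp (-G u)) 0 s := fun s hs =>
    ((hθ s hs).mul (hG s).neg.exp).congr_deriv (by ring)
  have hconst := constant_of_has_deriv_right_zero
    (fun s hs => (hderiv s hs.1).continuousAt.continuousWithinAt)
    (fun s hs => (hderiv s hs.1).hasDerivWithinAt) t ⟨ht, le_rfl⟩
  simp only [G, intervalIntegral.integral_same, neg_zero, exp_zero, mul_one] at hconst
  rw [← hconst, mul_assoc, ← exp_add, neg_add_cancel, exp_zero, mul_one]

theorem riccati_nonpos_general (α β : ℝ) (θ : ℝ → ℝ)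
    (hθ : ∀ t ≥ (0:ℝ), HasDerivAt θ (α * θ t + β * θ t ^ 2) t)
    (h0 : θ 0 ≤ 0) :
    ∀ ξ > (0:ℝ), θ ξ ≤ 0 := by
  intro ξ hξ
  have hθcont : ContinuousOn θ (Ici 0) := fun t ht => (hθ t ht).continuousAt.continuousWithinAt
  -- the coefficient `α + β θ` is only controlled on `[0, ∞)`, so extend it constantly to the left
  set g : ℝ → ℝ := fun s => α + β * θ (max 0 s)
  have hg : Continuous g := continuous_const.add <| continuous_const.mul <|
    hθcont.comp_continuous (continuous_const.max continuous_id) fun s => le_max_left 0 s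
  have hlin : ∀ t ≥ (0:ℝ), HasDerivAt θ (g t * θ t) t := fun t ht =>
    (hθ t ht).congr_deriv (by simp only [g, max_eq_right ht]; ring)
  rw [eq_mul_exp_integral_of_hasDerivAt_mul hg hlin hξ.le]
  exact mul_nonpos_of_nonpos_of_nonneg h0 (exp_pos _).le

/-- Riccati comparison lemma: if `α < 0`, `β ∈ ℝ`, and `θ` solves
`θ′(t) = α·θ(t) + β·θ(t)²` for `t ≥ 0` with `θ(0) ≤ 0`, then
`θ(ξ) ≤ 0` for all `ξ > 0`. -/
theorem riccati_nonpos (α β : ℝ) (hα : α < 0) (θ : ℝ → ℝ)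
    (hθ : ∀ t ≥ (0:ℝ), HasDerivAt θ (α * θ t + β * θ t ^ 2) t)
    (h0 : θ 0 ≤ 0) :
    ∀ ξ > (0:ℝ), θ ξ ≤ 0 :=
  riccati_nonpos_general α β θ hθ h0
end

section
/- Let f : ℝⁿ → ℝⁿ be an analytic vector field with domain D ⊆ ℝⁿ and initial set X₀ ⊆ ℝⁿ. Let χ : ℝⁿ → ℝ and ψ : ℝ → ℝ be analytic with: (a) χ(x) ≤ 0 for all x ∈ X₀; (b) L_f χ(x) − ψ(χ(x)) ≤ 0 for all x ∈ D; (c) every analytic θ : [0,∞) → ℝ with θ′(t) = ψ(θ(t)) for all t ≥ 0 and θ(0) ≤ 0 satisfies θ(ξ) ≤ 0 for all ξ > 0, and for every c ≤ 0 such a solution with θ(0) = c exists. Then every differentiable trajectory x : [0,∞) → ℝⁿ with x′(t) = f(x(t)) for all t ≥ 0, x(0) ∈ X₀ and x(t) ∈ D for all t ≥ 0 satisfies χ(x(t)) ≤ 0 for all t ≥ 0; that is, {x : χ(x) ≤ 0} is an over-approximation of the reachable set. -/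
/-!
Along a trajectory, `g(t) = χ(x(t))` satisfies the differential inequality `g' ≤ ψ(g)` with
`g(0) ≤ 0`. Let `θ` be a solution of `θ' = ψ(θ)` with `θ(0) = g(0)`. Since `ψ` is Lipschitz
near the compact arc `θ([0, t])`, the comparison principle gives `g ≤ θ` on `[0, t]`, and
`θ(t) ≤ 0` by assumption (c).
-/

open Set Filter Topology Metric

section Comparison

variable {ψ g g' θ : ℝ → ℝ} {a b r : ℝ} {K : NNReal}

/-- At a first contact of `g` with the fence `θ + ε e^{(K+1)(s-a)}`, the Lipschitz bound makes the
fence strictly faster than `g`. -/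
theorem le_add_exp_of_deriv_le_comp_of_lipschitzOnWith
    (hψ : LipschitzOnWith K ψ (cthickening r (θ '' Icc a b)))
    (hg : ContinuousOn g (Icc a b)) (hg' : ∀ s ∈ Ico a b, HasDerivWithinAt g (g' s) (Ici s) s)
    (hgψ : ∀ s ∈ Ico a b, g' s ≤ ψ (g s))
    (hθ : ContinuousOn θ (Icc a b))
    (hθ' : ∀ s ∈ Ico a b, HasDerivWithinAt θ (ψ (θ s)) (Ici s) s)
    (hga : g a ≤ θ a) {ε : ℝ} (hε : 0 < ε) (hεr : ε * Real.exp ((K + 1) * (b - a)) ≤ r) :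
    ∀ ⦃s⦄, s ∈ Icc a b → g s ≤ θ s + ε * Real.exp ((K + 1) * (s - a)) := by
  have hfence : ∀ s, HasDerivAt (fun s => ε * Real.exp ((K + 1) * (s - a)))
      (ε * Real.exp ((K + 1) * (s - a)) * (K + 1)) s := fun s => by
    simpa [mul_assoc] using
      ((((hasDerivAt_id s).sub_const a).const_mul ((K : ℝ) + 1)).exp).const_mul ε
  refine image_le_of_deriv_right_lt_deriv_boundary' hg hg' (by simp only [sub_self, mul_zero, Real.exp_zero, mul_one]; linarith)
    (hθ.add (fun s _ => (hfence s).continuousAt.continuousWithinAt))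
    (fun s hs => (hθ' s hs).add (hfence s).hasDerivWithinAt) ?_
  intro s hs hcontact
  set E := ε * Real.exp ((K + 1) * (s - a))
  have hE : 0 < E := mul_pos hε (Real.exp_pos _)
  have hEr : E ≤ r := (mul_le_mul_of_nonneg_left
    (Real.exp_le_exp.2 (by nlinarith [hs.1, hs.2, K.coe_nonneg])) hε.le).trans hεr
  have hθs : θ s ∈ θ '' Icc a b := mem_image_of_mem θ (Ico_subset_Icc_self hs)
  have hψ_step : ψ (θ s + E) - ψ (θ s) ≤ K * E := by
    have := hψ.dist_le_mul (θ s + E) (mem_cthickening_of_dist_le _ _ _ _ hθs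
      (by simpa [Real.dist_eq, abs_of_pos hE] using hEr)) (θ s) (self_subset_cthickening _ hθs)
    rw [Real.dist_eq, Real.dist_eq, add_sub_cancel_left, abs_of_pos hE] at this
    linarith [le_abs_self (ψ (θ s + E) - ψ (θ s))]
  have := hgψ s hs
  rw [hcontact] at this
  nlinarith

theorem le_of_deriv_le_comp_of_lipschitzOnWith (hr : 0 < r)
    (hψ : LipschitzOnWith K ψ (cthickening r (θ '' Icc a b)))
    (hg : ContinuousOn g (Icc a b)) (hg' : ∀ s ∈ Ico a b, HasDerivWithinAt g (g' s) (Ici s) s)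
    (hgψ : ∀ s ∈ Ico a b, g' s ≤ ψ (g s))
    (hθ : ContinuousOn θ (Icc a b))
    (hθ' : ∀ s ∈ Ico a b, HasDerivWithinAt θ (ψ (θ s)) (Ici s) s)
    (hga : g a ≤ θ a) : ∀ ⦃s⦄, s ∈ Icc a b → g s ≤ θ s := by
  intro s hs
  set C := Real.exp ((K + 1) * (s - a))
  have hlim : Tendsto (fun ε => θ s + ε * C) (𝓝[>] 0) (𝓝 (θ s)) := by
    have : Continuous fun ε : ℝ => θ s + ε * C := by fun_prop
    simpa using (this.tendsto 0).mono_left nhdsWithin_le_nhds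
  have hε₀ : 0 < r / Real.exp ((K + 1) * (b - a)) := div_pos hr (Real.exp_pos _)
  refine ge_of_tendsto hlim (mem_of_superset (Ioc_mem_nhdsGT hε₀) fun ε hε => ?_)
  exact le_add_exp_of_deriv_le_comp_of_lipschitzOnWith hψ hg hg' hgψ hθ hθ' hga hε.1
    ((le_div_iff₀ (Real.exp_pos _)).1 hε.2) hs

end Comparison

theorem barrier_over_approximation_general {n : ℕ}
    (f : (Fin n → ℝ) → (Fin n → ℝ)) (D X₀ : Set (Fin n → ℝ))
    (χ : (Fin n → ℝ) → ℝ) (ψ : ℝ → ℝ)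
    (hχa : ∀ x, AnalyticAt ℝ χ x)
    (hψa : ∀ y, AnalyticAt ℝ ψ y)
    (ha : ∀ x ∈ X₀, χ x ≤ 0)
    (hb : ∀ x ∈ D, fderiv ℝ χ x (f x) - ψ (χ x) ≤ 0)
    (hc1 : ∀ θ : ℝ → ℝ, (∀ t, AnalyticAt ℝ θ t) →
      (∀ t ≥ (0:ℝ), deriv θ t = ψ (θ t)) → θ 0 ≤ 0 →
      ∀ ξ > (0:ℝ), θ ξ ≤ 0)
    (hc2 : ∀ c ≤ (0:ℝ), ∃ θ : ℝ → ℝ, (∀ t, AnalyticAt ℝ θ t) ∧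
      (∀ t ≥ (0:ℝ), deriv θ t = ψ (θ t)) ∧ θ 0 = c) :
    ∀ x : ℝ → (Fin n → ℝ),
      (∀ t ≥ (0:ℝ), HasDerivAt x (f (x t)) t) →
      x 0 ∈ X₀ → (∀ t ≥ (0:ℝ), x t ∈ D) →
      ∀ t ≥ (0:ℝ), χ (x t) ≤ 0 := by
  intro x hx hx0 hxD t ht
  rcases ht.eq_or_lt with rfl | ht
  · exact ha _ hx0
  obtain ⟨θ, hθa, hθψ, hθ0⟩ := hc2 _ (ha _ hx0)
  have hθc : Continuous θ := continuous_iff_continuousAt.2 fun s => (hθa s).continuousAt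
  have hg' : ∀ s ≥ (0:ℝ), HasDerivAt (fun s => χ (x s)) (fderiv ℝ χ (x s) (f (x s))) s :=
    fun s hs => (hχa (x s)).differentiableAt.hasFDerivAt.comp_hasDerivAt s (hx s hs)
  have hθ' : ∀ s ≥ (0:ℝ), HasDerivAt θ (ψ (θ s)) s :=
    fun s hs => hθψ s hs ▸ (hθa s).differentiableAt.hasDerivAt
  obtain ⟨K, hK⟩ := ((AnalyticOnNhd.contDiff (n := 1) fun y _ => hψa y).locallyLipschitz
    |>.locallyLipschitzOn).exists_lipschitzOnWith_of_compact
    ((isCompact_Icc.image_of_continuousOn hθc.continuousOn).cthickening (r := 1))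
  have hcomp := le_of_deriv_le_comp_of_lipschitzOnWith one_pos hK
    (fun s hs => (hg' s hs.1).continuousAt.continuousWithinAt)
    (fun s hs => (hg' s hs.1).hasDerivWithinAt)
    (fun s hs => sub_nonpos.1 (hb _ (hxD s hs.1))) hθc.continuousOn
    (fun s hs => (hθ' s hs.1).hasDerivWithinAt) hθ0.ge (right_mem_Icc.2 ht.le)
  exact hcomp.trans (hc1 θ hθa hθψ (hθ0 ▸ ha _ hx0) t ht)

/-- If `χ` satisfies the relaxed barrier conditions (without an unsafe set),
then `{x : χ x ≤ 0}` over-approximates the reachable set: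
every trajectory staying in the domain `D` satisfies `χ(x(t)) ≤ 0`. -/
theorem barrier_over_approximation {n : ℕ}
    (f : (Fin n → ℝ) → (Fin n → ℝ)) (D X₀ : Set (Fin n → ℝ))
    (χ : (Fin n → ℝ) → ℝ) (ψ : ℝ → ℝ)
    (hf : ∀ x, AnalyticAt ℝ f x)
    (hχa : ∀ x, AnalyticAt ℝ χ x)
    (hψa : ∀ y, AnalyticAt ℝ ψ y)
    (ha : ∀ x ∈ X₀, χ x ≤ 0)
    (hb : ∀ x ∈ D, fderiv ℝ χ x (f x) - ψ (χ x) ≤ 0)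
    (hc1 : ∀ θ : ℝ → ℝ, (∀ t, AnalyticAt ℝ θ t) →
      (∀ t ≥ (0:ℝ), deriv θ t = ψ (θ t)) → θ 0 ≤ 0 →
      ∀ ξ > (0:ℝ), θ ξ ≤ 0)
    (hc2 : ∀ c ≤ (0:ℝ), ∃ θ : ℝ → ℝ, (∀ t, AnalyticAt ℝ θ t) ∧
      (∀ t ≥ (0:ℝ), deriv θ t = ψ (θ t)) ∧ θ 0 = c) :
    ∀ x : ℝ → (Fin n → ℝ),
      (∀ t ≥ (0:ℝ), HasDerivAt x (f (x t)) t) →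
      x 0 ∈ X₀ → (∀ t ≥ (0:ℝ), x t ∈ D) →
      ∀ t ≥ (0:ℝ), χ (x t) ≤ 0 :=
  barrier_over_approximation_general f D X₀ χ ψ hχa hψa ha hb hc1 hc2
end

section
/- Let f : ℝⁿ → ℝⁿ be an analytic vector field with domain D ⊆ ℝⁿ, initial set X₀ ⊆ ℝⁿ and unsafe set U ⊆ ℝⁿ. Let φ, χ : ℝⁿ → ℝ and ψ : ℝ → ℝ be analytic, with χ(x) ≤ 0 for all x ∈ X₀, and let δ : ℝⁿ → ℝ be a polynomial with δ(x) ≥ 0 for all x. Assume: (a) φ(x) ≤ 0 for all x ∈ X₀; (b) L_f φ(x) − ψ(φ(x)) − δ(x)·χ(x) ≤ 0 for all x ∈ D; (c) φ(x) > 0 for all x ∈ U; (d) every analytic θ : [0,∞) → ℝ with θ′(t) = ψ(θ(t)) for all t ≥ 0 and θ(0) ≤ 0 satisfies θ(ξ) ≤ 0 for all ξ > 0, and for every c ≤ 0 such a solution with θ(0) = c exists. Then for every differentiable trajectory τ : [0,∞) → ℝⁿ with τ′(t) = f(τ(t)) for all t ≥ 0, τ(0) ∈ X₀ and τ(t) ∈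 D for all t ≥ 0: if χ(τ(ξ)) ≤ 0 for all ξ ≥ 0, then φ(τ(ξ)) ≤ 0 for all ξ ≥ 0, and hence τ(ξ) ∉ U for all ξ ≥ 0. -/
/-!
Along a trajectory `τ` on which `χ ≤ 0`, the nonnegativity of `δ` turns condition (b) into the
differential inequality `(φ ∘ τ)' ≤ ψ (φ ∘ τ)`. Since `ψ` is analytic, hence locally Lipschitz,
the comparison principle bounds `φ ∘ τ` by the solution `θ` of `θ' = ψ θ`, `θ 0 = 0`, which stays
nonpositive by (d).
-/

open Set

theorem nonpos_of_deriv_right_le_mul_abs {h h' : ℝ → ℝ} {K a b : ℝ}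
    (hc : ContinuousOn h (Icc a b))
    (hd : ∀ t ∈ Ico a b, HasDerivWithinAt h (h' t) (Ici t) t)
    (ha : h a ≤ 0) (bound : ∀ t ∈ Ico a b, h' t ≤ K * |h t|) :
    ∀ t ∈ Icc a b, h t ≤ 0 := by
  intro t ht
  set L := |K| + 1
  -- Where `h` touches the barrier `ε e^{L (x - a)}`, its slope `h' ≤ K |h|` is below the
  -- barrier's slope `L h`, so `h` cannot cross it.
  have below_barrier : ∀ ε > 0, h t ≤ ε * Real.exp (L * (t - a)) := by
    intro ε hε
    have hB : ∀ x, HasDerivAt (fun x => ε * Real.exp (L * (x - a)))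
        (L * (ε * Real.exp (L * (x - a)))) x := fun x =>
      ((((hasDerivAt_id' x).sub_const a).const_mul L).exp.const_mul ε).congr_deriv (by ring)
    refine image_le_of_deriv_right_lt_deriv_boundary hc hd (by simpa using ha.trans hε.le) hB
      (fun x hx hxB => ?_) ht
    have hBpos : 0 < ε * Real.exp (L * (x - a)) := by positivity
    calc h' x ≤ K * |h x| := bound x hx
      _ ≤ |K| * (ε * Real.exp (L * (x - a))) := by
        rw [hxB, abs_of_pos hBpos]; gcongr; exact le_abs_self K
      _ < L * (ε * Real.exp (L * (x - a))) := by gcongr; linarith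
  refine le_of_forall_pos_le_add fun η hη => ?_
  have hE := Real.exp_pos (L * (t - a))
  simpa [hE.ne'] using below_barrier (η / Real.exp (L * (t - a))) (by positivity)

theorem le_of_deriv_right_le_comp_of_comp_le_deriv_right {ψ : ℝ → ℝ} (hψ : LocallyLipschitz ψ)
    {g g' θ θ' : ℝ → ℝ} {a b : ℝ}
    (hgc : ContinuousOn g (Icc a b)) (hgd : ∀ t ∈ Ico a b, HasDerivWithinAt g (g' t) (Ici t) t)
    (hθc : ContinuousOn θ (Icc a b)) (hθd : ∀ t ∈ Ico a b, HasDerivWithinAt θ (θ' t) (Ici t) t)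
    (hg : ∀ t ∈ Ico a b, g' t ≤ ψ (g t)) (hθ : ∀ t ∈ Ico a b, ψ (θ t) ≤ θ' t)
    (ha : g a ≤ θ a) : ∀ t ∈ Icc a b, g t ≤ θ t := by
  set S := g '' Icc a b ∪ θ '' Icc a b
  have hS : IsCompact S := (isCompact_Icc.image_of_continuousOn hgc).union
    (isCompact_Icc.image_of_continuousOn hθc)
  obtain ⟨K, hK⟩ := hψ.locallyLipschitzOn.exists_lipschitzOnWith_of_compact hS
  have bound : ∀ t ∈ Ico a b, g' t - θ' t ≤ K * |g t - θ t| := fun t ht => by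
    have hlip := hK.dist_le_mul (g t) (.inl ⟨t, Ico_subset_Icc_self ht, rfl⟩)
      (θ t) (.inr ⟨t, Ico_subset_Icc_self ht, rfl⟩)
    rw [Real.dist_eq, Real.dist_eq] at hlip
    linarith [hg t ht, hθ t ht, le_abs_self (ψ (g t) - ψ (θ t))]
  intro t ht
  simpa using nonpos_of_deriv_right_le_mul_abs (hgc.sub hθc)
    (fun t ht => (hgd t ht).sub (hθd t ht)) (sub_nonpos.2 ha) bound t ht

theorem conditional_barrier_general {n : ℕ}
    (f : (Fin n → ℝ) → (Fin n → ℝ)) (D X₀ U : Set (Fin n → ℝ))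
    (φ χ : (Fin n → ℝ) → ℝ) (ψ : ℝ → ℝ) (δ : (Fin n → ℝ) → ℝ)
    (hφa : ∀ x, AnalyticAt ℝ φ x)
    (hψa : ∀ y, AnalyticAt ℝ ψ y)
    (hδ : ∀ x, 0 ≤ δ x)
    (ha : ∀ x ∈ X₀, φ x ≤ 0)
    (hb : ∀ x ∈ D, fderiv ℝ φ x (f x) - ψ (φ x) - δ x * χ x ≤ 0)
    (hcU : ∀ x ∈ U, 0 < φ x)
    (hd1 : ∀ θ : ℝ → ℝ, (∀ t, AnalyticAt ℝ θ t) →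
      (∀ t ≥ (0:ℝ), deriv θ t = ψ (θ t)) → θ 0 ≤ 0 →
      ∀ ξ > (0:ℝ), θ ξ ≤ 0)
    (hd2 : ∀ c ≤ (0:ℝ), ∃ θ : ℝ → ℝ, (∀ t, AnalyticAt ℝ θ t) ∧
      (∀ t ≥ (0:ℝ), deriv θ t = ψ (θ t)) ∧ θ 0 = c) :
    ∀ τ : ℝ → (Fin n → ℝ),
      (∀ t ≥ (0:ℝ), HasDerivAt τ (f (τ t)) t) →
      τ 0 ∈ X₀ → (∀ t ≥ (0:ℝ), τ t ∈ D) →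
      (∀ ξ ≥ (0:ℝ), χ (τ ξ) ≤ 0) →
      (∀ ξ ≥ (0:ℝ), φ (τ ξ) ≤ 0) ∧ (∀ ξ ≥ (0:ℝ), τ ξ ∉ U) := by
  intro τ hτ hτ0 hτD hχτ
  have hψ : LocallyLipschitz ψ :=
    (contDiff_iff_contDiffAt.2 fun y => (hψa y).contDiffAt (n := 1)).locallyLipschitz
  obtain ⟨θ, hθa, hθode, hθ0⟩ := hd2 0 le_rfl
  have hθ : ∀ t ≥ (0:ℝ), HasDerivAt θ (ψ (θ t)) t := fun t ht =>
    hθode t ht ▸ (hθa t).differentiableAt.hasDerivAt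
  have hφτ : ∀ t ≥ (0:ℝ), HasDerivAt (φ ∘ τ) (fderiv ℝ φ (τ t) (f (τ t))) t := fun t ht =>
    (hφa (τ t)).differentiableAt.hasFDerivAt.comp_hasDerivAt t (hτ t ht)
  have hφτ_sub : ∀ t ≥ (0:ℝ), fderiv ℝ φ (τ t) (f (τ t)) ≤ ψ (φ (τ t)) := fun t ht => by
    nlinarith [hb (τ t) (hτD t ht), hδ (τ t), hχτ t ht]
  have hφτ_le_θ : ∀ ξ ≥ (0:ℝ), φ (τ ξ) ≤ θ ξ := fun ξ hξ =>
    le_of_deriv_right_le_comp_of_comp_le_deriv_right hψ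
      (HasDerivAt.continuousOn fun t ht => hφτ t ht.1)
      (fun t ht => (hφτ t ht.1).hasDerivWithinAt)
      (HasDerivAt.continuousOn fun t ht => hθ t ht.1)
      (fun t ht => (hθ t ht.1).hasDerivWithinAt)
      (fun t ht => hφτ_sub t ht.1) (fun _ _ => le_rfl) (hθ0.symm ▸ ha _ hτ0) ξ ⟨hξ, le_rfl⟩
  have hθ_nonpos : ∀ ξ ≥ (0:ℝ), θ ξ ≤ 0 := fun ξ hξ => by
    rcases hξ.eq_or_lt with rfl | hξ
    · exact hθ0.le
    · exact hd1 θ hθa hθode hθ0.le ξ hξ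
  have hφτ_nonpos : ∀ ξ ≥ (0:ℝ), φ (τ ξ) ≤ 0 := fun ξ hξ =>
    (hφτ_le_θ ξ hξ).trans (hθ_nonpos ξ hξ)
  exact ⟨hφτ_nonpos, fun ξ hξ hU => (hcU _ hU).not_ge (hφτ_nonpos ξ hξ)⟩

/-- Conditional barrier certificate: if `φ` satisfies the relaxed barrier
conditions in which the Lie-derivative bound is weakened by `δ·χ` with a
nonnegative polynomial `δ`, then along any trajectory on which `χ ≤ 0`
holds, `φ ≤ 0` holds as well, so the trajectory avoids the unsafe set `U`. -/
theorem conditional_barrier {n : ℕ}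
    (f : (Fin n → ℝ) → (Fin n → ℝ)) (D X₀ U : Set (Fin n → ℝ))
    (φ χ : (Fin n → ℝ) → ℝ) (ψ : ℝ → ℝ) (δ : (Fin n → ℝ) → ℝ)
    (hf : ∀ x, AnalyticAt ℝ f x)
    (hφa : ∀ x, AnalyticAt ℝ φ x)
    (hχa : ∀ x, AnalyticAt ℝ χ x)
    (hψa : ∀ y, AnalyticAt ℝ ψ y)
    (hχ0 : ∀ x ∈ X₀, χ x ≤ 0)
    (hδpoly : ∃ p : MvPolynomial (Fin n) ℝ, ∀ x, δ x = MvPolynomial.eval x p)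
    (hδ : ∀ x, 0 ≤ δ x)
    (ha : ∀ x ∈ X₀, φ x ≤ 0)
    (hb : ∀ x ∈ D, fderiv ℝ φ x (f x) - ψ (φ x) - δ x * χ x ≤ 0)
    (hcU : ∀ x ∈ U, 0 < φ x)
    (hd1 : ∀ θ : ℝ → ℝ, (∀ t, AnalyticAt ℝ θ t) →
      (∀ t ≥ (0:ℝ), deriv θ t = ψ (θ t)) → θ 0 ≤ 0 →
      ∀ ξ > (0:ℝ), θ ξ ≤ 0)
    (hd2 : ∀ c ≤ (0:ℝ), ∃ θ : ℝ → ℝ, (∀ t, AnalyticAt ℝ θ t) ∧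
      (∀ t ≥ (0:ℝ), deriv θ t = ψ (θ t)) ∧ θ 0 = c) :
    ∀ τ : ℝ → (Fin n → ℝ),
      (∀ t ≥ (0:ℝ), HasDerivAt τ (f (τ t)) t) →
      τ 0 ∈ X₀ → (∀ t ≥ (0:ℝ), τ t ∈ D) →
      (∀ ξ ≥ (0:ℝ), χ (τ ξ) ≤ 0) →
      (∀ ξ ≥ (0:ℝ), φ (τ ξ) ≤ 0) ∧ (∀ ξ ≥ (0:ℝ), τ ξ ∉ U) :=
  conditional_barrier_general f D X₀ U φ χ ψ δ hφa hψa hδ ha hb hcU hd1 hd2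
end

section
/- Let f : ℝⁿ → ℝⁿ be an analytic vector field with domain D ⊆ ℝⁿ, initial set X₀ ⊆ ℝⁿ and unsafe set U ⊆ ℝⁿ, and let χ, φ : ℝⁿ → ℝ, ψ₁, ψ₂ : ℝ → ℝ be analytic and δ : ℝⁿ → ℝ a polynomial with δ(x) ≥ 0 for all x, satisfying: χ(x) ≤ 0 and φ(x) ≤ 0 for all x ∈ X₀; L_f χ(x) − ψ₁(χ(x)) ≤ 0 and L_f φ(x) − ψ₂(φ(x)) − δ(x)·χ(x) ≤ 0 for all x ∈ D; φ(x) > 0 for all x ∈ U; and for i = 1, 2, every analytic θ : [0,∞) → ℝ with θ′(t) = ψ_i(θ(t)) for all t ≥ 0 and θ(0) ≤ 0 satisfies θ(ξ) ≤ 0 for all ξ > 0, and for every c ≤ 0 such a solution with θ(0) = c exists. Then the set {x ∈ ℝⁿ : χ(x) ≤ 0 ∧ φ(x) ≤ 0} is invariant along trajectories: every differentiable trajectory x : [0,∞) → ℝⁿ with x′(t) = f(x(t)) for all t ≥ 0, x(0) ∈ X₀ and x(t) ∈ D for all t ≥ 0 satisfies χ(x(t)) ≤ 0 and φ(x(t))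 ≤ 0 for all t ≥ 0. -/
/-!
Along a trajectory, `t ↦ χ (x t)` is a subsolution of `θ' = ψ₁ θ`, so by the comparison
principle it stays below the solution started at `χ (x 0) ≤ 0`, which stays nonpositive.
Once `χ ≤ 0` along the trajectory, `δ ≥ 0` makes `δ · χ ≤ 0`, so `t ↦ φ (x t)` is a
subsolution of `θ' = ψ₂ θ` and the same argument applies.
-/

open Set Real

theorem LocallyLipschitz.le_of_deriv_right_le_of_solution {ψ g g' θ : ℝ → ℝ} {a b : ℝ}
    (hψ : LocallyLipschitz ψ) (hg : ContinuousOn g (Icc a b))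
    (hg' : ∀ t ∈ Ico a b, HasDerivWithinAt g (g' t) (Ici t) t)
    (hgψ : ∀ t ∈ Ico a b, g' t ≤ ψ (g t)) (hθ : ContinuousOn θ (Icc a b))
    (hθ' : ∀ t ∈ Ico a b, HasDerivWithinAt θ (ψ (θ t)) (Ici t) t) (ha : g a ≤ θ a) :
    ∀ ⦃t⦄, t ∈ Icc a b → g t ≤ θ t := by
  obtain ⟨K, hK⟩ := hψ.locallyLipschitzOn.exists_lipschitzOnWith_of_compact
    ((isCompact_Icc.image_of_continuousOn hg).union (isCompact_Icc.image_of_continuousOn hθ))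
  set L : ℝ := K + 1
  -- `θ + ε e^{L t}` is a strict supersolution, so `g` cannot touch it from below.
  have hperturbed : ∀ ε > 0, ∀ ⦃t⦄, t ∈ Icc a b → g t ≤ θ t + ε * exp (L * t) := by
    intro ε hε
    have hexp : ∀ t, HasDerivAt (fun s => ε * exp (L * s)) (L * (ε * exp (L * t))) t :=
      fun t => (((hasDerivAt_id' t).const_mul L).exp.const_mul ε).congr_deriv (by ring)
    refine image_le_of_deriv_right_lt_deriv_boundary' hg hg'
      (by linarith [mul_pos hε (exp_pos (L * a))])
      (hθ.add (by fun_prop)) (fun t ht => (hθ' t ht).add (hexp t).hasDerivWithinAt) ?_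
    intro t ht htouch
    have hgt : g t ∈ g '' Icc a b ∪ θ '' Icc a b :=
      .inl (mem_image_of_mem g (Ico_subset_Icc_self ht))
    have hθt : θ t ∈ g '' Icc a b ∪ θ '' Icc a b :=
      .inr (mem_image_of_mem θ (Ico_subset_Icc_self ht))
    have hgap : 0 < ε * exp (L * t) := mul_pos hε (exp_pos _)
    have hdist : dist (g t) (θ t) = ε * exp (L * t) := by
      rw [dist_eq, htouch, add_sub_cancel_left, abs_of_pos hgap]
    have hlip : ψ (g t) - ψ (θ t) ≤ K * (ε * exp (L * t)) :=
      (le_abs_self _).trans (hdist ▸ hK.dist_le_mul (g t) hgt (θ t) hθt)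
    linarith [hgψ t ht]
  intro t ht
  refine le_of_forall_pos_le_add fun η hη => ?_
  have h := hperturbed (η / exp (L * t)) (div_pos hη (exp_pos _)) ht
  rwa [div_mul_cancel₀ _ (exp_ne_zero _)] at h

theorem nonpos_of_deriv_le_of_comparison {ψ g g' : ℝ → ℝ} (hψ : LocallyLipschitz ψ)
    (hg : ∀ t ≥ (0:ℝ), HasDerivAt g (g' t) t) (hgψ : ∀ t ≥ (0:ℝ), g' t ≤ ψ (g t))
    (hg0 : g 0 ≤ 0)
    (hcmpa : ∀ θ : ℝ → ℝ, (∀ t, AnalyticAt ℝ θ t) →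
      (∀ t ≥ (0:ℝ), deriv θ t = ψ (θ t)) → θ 0 ≤ 0 → ∀ ξ > (0:ℝ), θ ξ ≤ 0)
    (hcmpb : ∀ c ≤ (0:ℝ), ∃ θ : ℝ → ℝ, (∀ t, AnalyticAt ℝ θ t) ∧
      (∀ t ≥ (0:ℝ), deriv θ t = ψ (θ t)) ∧ θ 0 = c) :
    ∀ t ≥ (0:ℝ), g t ≤ 0 := by
  obtain ⟨θ, hθa, hθψ, hθ0⟩ := hcmpb (g 0) hg0
  have hθ' : ∀ t ≥ (0:ℝ), HasDerivAt θ (ψ (θ t)) t := fun t ht =>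
    hθψ t ht ▸ (hθa t).differentiableAt.hasDerivAt
  intro t ht
  rcases ht.eq_or_lt with rfl | ht
  · exact hg0
  have hle : g t ≤ θ t :=
    hψ.le_of_deriv_right_le_of_solution
      (fun s hs => (hg s hs.1).continuousAt.continuousWithinAt)
      (fun s hs => (hg s hs.1).hasDerivWithinAt) (fun s hs => hgψ s hs.1)
      (fun s _ => (hθa s).continuousAt.continuousWithinAt)
      (fun s hs => (hθ' s hs.1).hasDerivWithinAt) hθ0.ge ⟨ht.le, le_rfl⟩
  exact hle.trans (hcmpa θ hθa hθψ (hθ0 ▸ hg0) t ht)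

theorem combined_barrier_invariant_general {n : ℕ}
    (f : (Fin n → ℝ) → (Fin n → ℝ)) (D X₀ : Set (Fin n → ℝ))
    (χ φ : (Fin n → ℝ) → ℝ) (ψ₁ ψ₂ : ℝ → ℝ) (δ : (Fin n → ℝ) → ℝ)
    (hχa : ∀ x, AnalyticAt ℝ χ x)
    (hφa : ∀ x, AnalyticAt ℝ φ x)
    (hψ₁a : ∀ y, AnalyticAt ℝ ψ₁ y)
    (hψ₂a : ∀ y, AnalyticAt ℝ ψ₂ y)
    (hδ : ∀ x, 0 ≤ δ x)
    (hχ0 : ∀ x ∈ X₀, χ x ≤ 0)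
    (hφ0 : ∀ x ∈ X₀, φ x ≤ 0)
    (hχD : ∀ x ∈ D, fderiv ℝ χ x (f x) - ψ₁ (χ x) ≤ 0)
    (hφD : ∀ x ∈ D, fderiv ℝ φ x (f x) - ψ₂ (φ x) - δ x * χ x ≤ 0)
    (hcmp1a : ∀ θ : ℝ → ℝ, (∀ t, AnalyticAt ℝ θ t) →
      (∀ t ≥ (0:ℝ), deriv θ t = ψ₁ (θ t)) → θ 0 ≤ 0 →
      ∀ ξ > (0:ℝ), θ ξ ≤ 0)
    (hcmp1b : ∀ c ≤ (0:ℝ), ∃ θ : ℝ → ℝ, (∀ t, AnalyticAt ℝ θ t) ∧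
      (∀ t ≥ (0:ℝ), deriv θ t = ψ₁ (θ t)) ∧ θ 0 = c)
    (hcmp2a : ∀ θ : ℝ → ℝ, (∀ t, AnalyticAt ℝ θ t) →
      (∀ t ≥ (0:ℝ), deriv θ t = ψ₂ (θ t)) → θ 0 ≤ 0 →
      ∀ ξ > (0:ℝ), θ ξ ≤ 0)
    (hcmp2b : ∀ c ≤ (0:ℝ), ∃ θ : ℝ → ℝ, (∀ t, AnalyticAt ℝ θ t) ∧
      (∀ t ≥ (0:ℝ), deriv θ t = ψ₂ (θ t)) ∧ θ 0 = c) :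
    ∀ x : ℝ → (Fin n → ℝ),
      (∀ t ≥ (0:ℝ), HasDerivAt x (f (x t)) t) →
      x 0 ∈ X₀ → (∀ t ≥ (0:ℝ), x t ∈ D) →
      ∀ t ≥ (0:ℝ), χ (x t) ≤ 0 ∧ φ (x t) ≤ 0 := by
  intro x hx hx0 hxD
  have hlip : ∀ ψ : ℝ → ℝ, (∀ y, AnalyticAt ℝ ψ y) → LocallyLipschitz ψ := fun ψ hψ =>
    (contDiff_iff_contDiffAt.2 fun y => (hψ y).contDiffAt).locallyLipschitz
  have hlie : ∀ V : (Fin n → ℝ) → ℝ, (∀ y, AnalyticAt ℝ V y) →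
      ∀ t ≥ (0:ℝ), HasDerivAt (V ∘ x) (fderiv ℝ V (x t) (f (x t))) t := fun V hV t ht =>
    (hV (x t)).differentiableAt.hasFDerivAt.comp_hasDerivAt t (hx t ht)
  have hχ : ∀ t ≥ (0:ℝ), χ (x t) ≤ 0 :=
    nonpos_of_deriv_le_of_comparison (hlip ψ₁ hψ₁a) (hlie χ hχa)
      (fun t ht => by linarith [hχD _ (hxD t ht)]) (hχ0 _ hx0) hcmp1a hcmp1b
  have hφ : ∀ t ≥ (0:ℝ), φ (x t) ≤ 0 :=
    nonpos_of_deriv_le_of_comparison (hlip ψ₂ hψ₂a) (hlie φ hφa)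
      (fun t ht => by
        linarith [hφD _ (hxD t ht), mul_nonpos_of_nonneg_of_nonpos (hδ (x t)) (hχ t ht)])
      (hφ0 _ hx0) hcmp2a hcmp2b
  exact fun t ht => ⟨hχ t ht, hφ t ht⟩

/-- A combined barrier certificate `(χ, φ)` yields a differential invariant:
the set `{x : χ x ≤ 0 ∧ φ x ≤ 0}` is invariant along every trajectory of
`ẋ = f(x)` starting in `X₀` and staying in `D`. -/
theorem combined_barrier_invariant {n : ℕ}
    (f : (Fin n → ℝ) → (Fin n → ℝ)) (D X₀ U : Set (Fin n → ℝ))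
    (χ φ : (Fin n → ℝ) → ℝ) (ψ₁ ψ₂ : ℝ → ℝ) (δ : (Fin n → ℝ) → ℝ)
    (hf : ∀ x, AnalyticAt ℝ f x)
    (hχa : ∀ x, AnalyticAt ℝ χ x)
    (hφa : ∀ x, AnalyticAt ℝ φ x)
    (hψ₁a : ∀ y, AnalyticAt ℝ ψ₁ y)
    (hψ₂a : ∀ y, AnalyticAt ℝ ψ₂ y)
    (hδpoly : ∃ p : MvPolynomial (Fin n) ℝ, ∀ x, δ x = MvPolynomial.eval x p)
    (hδ : ∀ x, 0 ≤ δ x)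
    (hχ0 : ∀ x ∈ X₀, χ x ≤ 0)
    (hφ0 : ∀ x ∈ X₀, φ x ≤ 0)
    (hχD : ∀ x ∈ D, fderiv ℝ χ x (f x) - ψ₁ (χ x) ≤ 0)
    (hφD : ∀ x ∈ D, fderiv ℝ φ x (f x) - ψ₂ (φ x) - δ x * χ x ≤ 0)
    (hU : ∀ x ∈ U, 0 < φ x)
    (hcmp1a : ∀ θ : ℝ → ℝ, (∀ t, AnalyticAt ℝ θ t) →
      (∀ t ≥ (0:ℝ), deriv θ t = ψ₁ (θ t)) → θ 0 ≤ 0 →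
      ∀ ξ > (0:ℝ), θ ξ ≤ 0)
    (hcmp1b : ∀ c ≤ (0:ℝ), ∃ θ : ℝ → ℝ, (∀ t, AnalyticAt ℝ θ t) ∧
      (∀ t ≥ (0:ℝ), deriv θ t = ψ₁ (θ t)) ∧ θ 0 = c)
    (hcmp2a : ∀ θ : ℝ → ℝ, (∀ t, AnalyticAt ℝ θ t) →
      (∀ t ≥ (0:ℝ), deriv θ t = ψ₂ (θ t)) → θ 0 ≤ 0 →
      ∀ ξ > (0:ℝ), θ ξ ≤ 0)
    (hcmp2b : ∀ c ≤ (0:ℝ), ∃ θ : ℝ → ℝ, (∀ t, AnalyticAt ℝ θ t) ∧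
      (∀ t ≥ (0:ℝ), deriv θ t = ψ₂ (θ t)) ∧ θ 0 = c) :
    ∀ x : ℝ → (Fin n → ℝ),
      (∀ t ≥ (0:ℝ), HasDerivAt x (f (x t)) t) →
      x 0 ∈ X₀ → (∀ t ≥ (0:ℝ), x t ∈ D) →
      ∀ t ≥ (0:ℝ), χ (x t) ≤ 0 ∧ φ (x t) ≤ 0 :=
  combined_barrier_invariant_general f D X₀ χ φ ψ₁ ψ₂ δ hχa hφa hψ₁a hψ₂a hδ hχ0 hφ0 hχD hφD hcmp1a
    hcmp1b hcmp2a hcmp2b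
end

section
/- Let f : ℝⁿ → ℝⁿ be an analytic vector field with domain D ⊆ ℝⁿ, initial set X₀ ⊆ ℝⁿ and unsafe set U ⊆ ℝⁿ, let α < 0 and β > 0, and let φ : ℝⁿ → ℝ be analytic with: φ(x) ≤ 0 for all x ∈ X₀; L_f φ(x) − α·φ(x) − β·φ(x)² ≤ 0 for all x ∈ D; and φ(x) > 0 for all x ∈ U. Then every differentiable trajectory x : [0,∞) → ℝⁿ with x′(t) = f(x(t)) for all t ≥ 0, x(0) ∈ X₀ and x(t) ∈ D for all t ≥ 0 satisfies φ(x(t)) ≤ 0 for all t ≥ 0; in particular x(t) ∉ U for all t ≥ 0. -/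
/-- The general barrier condition instantiated with `ψ(θ) = α·θ + β·θ²`
for `α < 0` and `β > 0`: a function `φ` that is nonpositive on the initial
set, positive on the unsafe set, and satisfies
`L_f φ(x) − α·φ(x) − β·φ(x)² ≤ 0` on the domain `D`, is a barrier
certificate, so every trajectory staying in `D` avoids the unsafe set. -/
theorem riccati_barrier_certificate {n : ℕ}
    (f : (Fin n → ℝ) → (Fin n → ℝ)) (D X₀ U : Set (Fin n → ℝ))
    (α β : ℝ) (hα : α < 0) (hβ : 0 < β)
    (φ : (Fin n → ℝ) → ℝ)
    (hf : ∀ x, AnalyticAt ℝ f x)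
    (hφa : ∀ x, AnalyticAt ℝ φ x)
    (h1 : ∀ x ∈ X₀, φ x ≤ 0)
    (h2 : ∀ x ∈ D, fderiv ℝ φ x (f x) - α * φ x - β * (φ x) ^ 2 ≤ 0)
    (h3 : ∀ x ∈ U, 0 < φ x) :
    ∀ x : ℝ → (Fin n → ℝ),
      (∀ t ≥ (0:ℝ), HasDerivAt x (f (x t)) t) →
      x 0 ∈ X₀ → (∀ t ≥ (0:ℝ), x t ∈ D) →
      (∀ t ≥ (0:ℝ), φ (x t) ≤ 0) ∧ (∀ t ≥ (0:ℝ), x t ∉ U) := by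
  intro x hx hx0 hxD
  have key : ∀ t ≥ (0:ℝ), φ (x t) ≤ 0 := by
    set g : ℝ → ℝ := fun t => φ (x t) with hgdef
    have hxc : ∀ t : ℝ, 0 ≤ t → ContinuousAt x t := fun t ht => (hx t ht).continuousAt
    set a : ℝ → ℝ := fun t => α + β * φ (x (max t 0)) with hadef
    have hac : Continuous a := by
      have hmax : Continuous fun t : ℝ => max t 0 := continuous_id.max continuous_const
      have hxm : Continuous fun t : ℝ => x (max t 0) := by
        rw [continuous_iff_continuousAt]
        intro t
        show ContinuousAt (x ∘ fun s => max s 0) t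
        exact ContinuousAt.comp (g := x) (hxc (max t 0) (le_max_right _ _)) hmax.continuousAt
      have hφc : Continuous fun t : ℝ => φ (x (max t 0)) := by
        rw [continuous_iff_continuousAt]
        intro t
        show ContinuousAt (φ ∘ fun s => x (max s 0)) t
        exact ContinuousAt.comp (g := φ) (hφa _).continuousAt hxm.continuousAt
      exact continuous_const.add (continuous_const.mul hφc)
    set A : ℝ → ℝ := fun t => ∫ s in (0:ℝ)..t, a s with hAdef
    have hA : ∀ t : ℝ, HasDerivAt A (a t) t := fun t =>
      (hac.integral_hasStrictDerivAt 0 t).hasDerivAt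
    set h : ℝ → ℝ := fun t => g t * Real.exp (-(A t)) with hhdef
    have hgd : ∀ t : ℝ, 0 ≤ t →
        HasDerivAt g (fderiv ℝ φ (x t) (f (x t))) t := fun t ht =>
      ((hφa (x t)).differentiableAt.hasFDerivAt).comp_hasDerivAt t (hx t ht)
    have hhd : ∀ t : ℝ, 0 ≤ t →
        HasDerivAt h (fderiv ℝ φ (x t) (f (x t)) * Real.exp (-(A t))
          + g t * (Real.exp (-(A t)) * (-(a t)))) t := fun t ht =>
      (hgd t ht).mul ((hA t).neg.exp)
    have hanti : AntitoneOn h (Set.Ici (0:ℝ)) := by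
      apply antitoneOn_of_deriv_nonpos (convex_Ici 0)
      · exact fun t ht => ((hhd t ht).continuousAt).continuousWithinAt
      · intro t ht
        rw [interior_Ici] at ht
        exact ((hhd t (le_of_lt ht)).differentiableAt).differentiableWithinAt
      · intro t ht
        rw [interior_Ici] at ht
        have ht' : (0:ℝ) ≤ t := le_of_lt ht
        rw [(hhd t ht').deriv]
        have hmax : max t 0 = t := max_eq_left ht'
        have h2' := h2 (x t) (hxD t ht')
        have hat : a t = α + β * φ (x t) := by simp [hadef, hmax]
        have hexp : (0:ℝ) < Real.exp (-(A t)) := Real.exp_pos _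
        have hfact : fderiv ℝ φ (x t) (f (x t)) * Real.exp (-(A t))
            + g t * (Real.exp (-(A t)) * (-(a t)))
            = (fderiv ℝ φ (x t) (f (x t)) - α * φ (x t) - β * (φ (x t))^2)
              * Real.exp (-(A t)) := by
          rw [hat]; simp only [hgdef]; ring
        rw [hfact]
        exact mul_nonpos_of_nonpos_of_nonneg h2' (le_of_lt hexp)
    intro t ht
    have := hanti (Set.self_mem_Ici) (Set.mem_Ici.mpr ht) ht
    have hA0 : A 0 = 0 := by simp [hAdef]
    have hh0 : h 0 = g 0 := by simp [hhdef, hA0]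
    have hg0 : g 0 ≤ 0 := h1 (x 0) hx0
    have hht : h t ≤ 0 := by rw [hh0] at this; linarith
    have hexp : (0:ℝ) < Real.exp (-(A t)) := Real.exp_pos _
    have : g t * Real.exp (-(A t)) ≤ 0 := hht
    nlinarith
  refine ⟨key, fun t ht hU => ?_⟩
  exact absurd (key t ht) (not_le.mpr (h3 (x t) hU))
end

section
/- Consider the planar system ẋ₁ = x₁² − 2x₁ + x₂, ẋ₂ = x₁ + x₂² − 2x₂, with initial set I = {(x₁,x₂) : x₁² + x₂² ≤ 0.01} and unsafe set U = {(x₁,x₂) : x₁² + x₂² ≥ 0.25}. Then every differentiable trajectory x : [0,∞) → ℝ² with x′(t) = f(x(t)) for all t ≥ 0 and x(0) ∈ I satisfies x₁(t)² + x₂(t)² ≤ 0.04 for all t ≥ 0; in particular x(t) ∉ U for all t ≥ 0. -/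
/-!
φ(x₁, x₂) = x₁² + x₂² − 0.04 is a barrier certificate: along a trajectory, u = φ ∘ x satisfies
u′ = L_f φ ≤ −u + 2u², and since u ≥ −0.04 this gives u′ ≤ −2u wherever u < 0. A function with
u(0) < 0 obeying u′ ≤ k u on {u < 0} stays below the fence u(0)·e^{(k−1)t}, so it never reaches 0.
-/

theorem neg_of_hasDerivAt_le_mul {u u' : ℝ → ℝ} {k : ℝ}
    (hu : ∀ t ≥ (0:ℝ), HasDerivAt u (u' t) t) (h0 : u 0 < 0)
    (hbound : ∀ t ≥ (0:ℝ), u t < 0 → u' t ≤ k * u t) :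
    ∀ t ≥ (0:ℝ), u t < 0 := by
  intro t ht
  set B : ℝ → ℝ := fun s => u 0 * Real.exp ((k - 1) * s)
  have hB : ∀ s, HasDerivAt B ((k - 1) * B s) s := fun s => by
    simpa [B, mul_comm, mul_left_comm] using
      ((hasDerivAt_mul_const (k - 1)).exp).const_mul (u 0)
  have hB_neg : ∀ s, B s < 0 := fun s => mul_neg_of_neg_of_pos h0 (Real.exp_pos _)
  have hfence : u t ≤ B t := by
    refine image_le_of_deriv_right_lt_deriv_boundary'
      (fun s hs => (hu s hs.1).continuousAt.continuousWithinAt)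
      (fun s hs => (hu s hs.1).hasDerivWithinAt) (by simp [B])
      (fun s _ => (hB s).continuousAt.continuousWithinAt)
      (fun s _ => (hB s).hasDerivWithinAt) ?_ ⟨ht, le_rfl⟩
    intro s hs hus
    have hu' := hbound s hs.1 (hus ▸ hB_neg s)
    rw [hus] at hu'
    linarith [hB_neg s]
  exact hfence.trans_lt (hB_neg t)

namespace PlanarSystem

def barrier (x₁ x₂ : ℝ) : ℝ := x₁ ^ 2 + x₂ ^ 2 - 0.04

def barrierLieDeriv (x₁ x₂ : ℝ) : ℝ :=
  2 * x₁ * (x₁ ^ 2 - 2 * x₁ + x₂) + 2 * x₂ * (x₁ + x₂ ^ 2 - 2 * x₂)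

theorem hasDerivAt_barrier_comp {x₁ x₂ : ℝ → ℝ} {t : ℝ}
    (h₁ : HasDerivAt x₁ ((x₁ t) ^ 2 - 2 * x₁ t + x₂ t) t)
    (h₂ : HasDerivAt x₂ (x₁ t + (x₂ t) ^ 2 - 2 * x₂ t) t) :
    HasDerivAt (fun s => barrier (x₁ s) (x₂ s)) (barrierLieDeriv (x₁ t) (x₂ t)) t := by
  refine (((h₁.pow 2).add (h₂.pow 2)).sub_const (0.04 : ℝ)).congr_deriv ?_
  rw [barrierLieDeriv]
  ring

theorem barrierLieDeriv_le (x₁ x₂ : ℝ) :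
    barrierLieDeriv x₁ x₂ ≤ -barrier x₁ x₂ + 2 * barrier x₁ x₂ ^ 2 := by
  simp only [barrierLieDeriv, barrier]
  nlinarith [sq_nonneg (x₁ - x₂), sq_nonneg (x₁ + x₂), sq_nonneg (x₁ ^ 2 + x₂ ^ 2 - x₁ - x₂),
    sq_nonneg (x₁ - 1 / 2), sq_nonneg (x₂ - 1 / 2), sq_nonneg (x₁ ^ 2 - x₁), sq_nonneg (x₂ ^ 2 - x₂)]

theorem barrierLieDeriv_le_of_barrier_neg {x₁ x₂ : ℝ} (h : barrier x₁ x₂ < 0) :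
    barrierLieDeriv x₁ x₂ ≤ -2 * barrier x₁ x₂ := by
  have hψ := barrierLieDeriv_le x₁ x₂
  have hlow : -1 / 2 ≤ barrier x₁ x₂ := by
    simp only [barrier]
    nlinarith [sq_nonneg x₁, sq_nonneg x₂]
  nlinarith

end PlanarSystem

open PlanarSystem in
/-- For the planar system `ẋ₁ = x₁² − 2x₁ + x₂`, `ẋ₂ = x₁ + x₂² − 2x₂`
with initial set `{x₁² + x₂² ≤ 0.01}` and unsafe set `{x₁² + x₂² ≥ 0.25}`,
every trajectory satisfies `x₁(t)² + x₂(t)² ≤ 0.04` for all `t ≥ 0`; in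
particular it never enters the unsafe set. -/
theorem planar_system_safe (x₁ x₂ : ℝ → ℝ)
    (h₁ : ∀ t ≥ (0:ℝ), HasDerivAt x₁ ((x₁ t) ^ 2 - 2 * x₁ t + x₂ t) t)
    (h₂ : ∀ t ≥ (0:ℝ), HasDerivAt x₂ (x₁ t + (x₂ t) ^ 2 - 2 * x₂ t) t)
    (hinit : (x₁ 0) ^ 2 + (x₂ 0) ^ 2 ≤ 0.01) :
    ∀ t ≥ (0:ℝ),
      (x₁ t) ^ 2 + (x₂ t) ^ 2 ≤ 0.04 ∧
      ¬((x₁ t) ^ 2 + (x₂ t) ^ 2 ≥ 0.25) := by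
  have hneg : ∀ t ≥ (0:ℝ), barrier (x₁ t) (x₂ t) < 0 :=
    neg_of_hasDerivAt_le_mul (fun t ht => hasDerivAt_barrier_comp (h₁ t ht) (h₂ t ht))
      (by simp only [barrier]; linarith) (fun _ _ => barrierLieDeriv_le_of_barrier_neg)
  intro t ht
  have h := hneg t ht
  simp only [barrier] at h
  exact ⟨by linarith, by linarith⟩
end

section
/- Consider the planar vector field f(x₁,x₂) = (x₁² − 2x₁ + x₂, x₁ + x₂² − 2x₂), the initial set I = {(x₁,x₂) : x₁² + x₂² ≤ 0.01} and the unsafe set U = {(x₁,x₂) : x₁² + x₂² ≥ 0.25}. There is no real polynomial φ(x₁,x₂) = a₂₀x₁² + a₁₁x₁x₂ + a₀₂x₂² + a₁₀x₁ + a₀₁x₂ + a₀₀ of total degree at most 2 and no real number α such that simultaneously: φ(x) ≤ 0 for all x ∈ I, φ(x) > 0 for all x ∈ U, and −L_f φ(x) + α·φ(x) ≥ 0 for all x ∈ ℝ². -/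
/-!
Along each of the lines `x₂ = 0`, `x₁ = 0` and `x₁ = x₂`, the function `−L_f φ + αφ` is a cubic
in the line parameter whose leading coefficient is `−2` times the quadratic part of `φ` in the
direction of the line. A cubic that is nonnegative on all of `ℝ` has leading coefficient zero, so
`φ` is affine. But an affine `φ` with `φ(0) ≤ 0` cannot be positive at both `(±1/2, 0)`.
-/

open Polynomial Filter

lemma exists_cubic_neg_of_leading_neg {a : ℝ} (b c d : ℝ) (ha : a < 0) :
    ∃ t : ℝ, a * t ^ 3 + b * t ^ 2 + c * t + d < 0 := by
  have hdeg : 0 < (C a * X ^ 3 + C b * X ^ 2 + C c * X + C d).degree := by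
    rw [degree_cubic ha.ne]
    exact WithBot.coe_lt_coe.mpr (by norm_num)
  have hlead : (C a * X ^ 3 + C b * X ^ 2 + C c * X + C d).leadingCoeff ≤ 0 := by
    rw [leadingCoeff_cubic ha.ne]
    exact ha.le
  obtain ⟨t, ht⟩ :=
    ((tendsto_atBot_of_leadingCoeff_nonpos _ hdeg hlead).eventually (eventually_lt_atBot 0)).exists
  exact ⟨t, by simpa using ht⟩

lemma cubic_leading_eq_zero_of_nonneg {a b c d : ℝ}
    (h : ∀ t : ℝ, 0 ≤ a * t ^ 3 + b * t ^ 2 + c * t + d) : a = 0 := by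
  refine le_antisymm (not_lt.mp fun ha => ?_) (not_lt.mp fun ha => ?_)
  · obtain ⟨t, ht⟩ := exists_cubic_neg_of_leading_neg b (-c) d (neg_neg_of_pos ha)
    exact ht.not_ge ((h (-t)).trans_eq (by ring))
  · obtain ⟨t, ht⟩ := exists_cubic_neg_of_leading_neg b c d ha
    exact ht.not_ge (h t)

/-- No quadratic polynomial `φ = a₂₀x₁² + a₁₁x₁x₂ + a₀₂x₂² + a₁₀x₁ + a₀₁x₂ + a₀₀`
is an exponential-condition barrier certificate (in the sense of Kong et al.,
`ψ(θ) = αθ`) for the planar vector field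
`f(x₁,x₂) = (x₁² − 2x₁ + x₂, x₁ + x₂² − 2x₂)` with initial set
`{x₁² + x₂² ≤ 0.01}` and unsafe set `{x₁² + x₂² ≥ 0.25}`.
Here `L_f φ = ∇φ · f` is written out explicitly. -/
theorem no_quadratic_exponential_barrier :
    ¬ ∃ a20 a11 a02 a10 a01 a00 α : ℝ,
      (∀ x₁ x₂ : ℝ, x₁ ^ 2 + x₂ ^ 2 ≤ 0.01 →
        a20 * x₁ ^ 2 + a11 * x₁ * x₂ + a02 * x₂ ^ 2
          + a10 * x₁ + a01 * x₂ + a00 ≤ 0) ∧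
      (∀ x₁ x₂ : ℝ, x₁ ^ 2 + x₂ ^ 2 ≥ 0.25 →
        0 < a20 * x₁ ^ 2 + a11 * x₁ * x₂ + a02 * x₂ ^ 2
          + a10 * x₁ + a01 * x₂ + a00) ∧
      (∀ x₁ x₂ : ℝ,
        0 ≤ -((2 * a20 * x₁ + a11 * x₂ + a10) * (x₁ ^ 2 - 2 * x₁ + x₂)
              + (a11 * x₁ + 2 * a02 * x₂ + a01) * (x₁ + x₂ ^ 2 - 2 * x₂))
          + α * (a20 * x₁ ^ 2 + a11 * x₁ * x₂ + a02 * x₂ ^ 2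
              + a10 * x₁ + a01 * x₂ + a00)) := by
  rintro ⟨a20, a11, a02, a10, a01, a00, α, hI, hU, hL⟩
  have h20 : -(2 * a20) = 0 := cubic_leading_eq_zero_of_nonneg
    (b := 4 * a20 - a10 - a11 + α * a20) (c := 2 * a10 - a01 + α * a10) (d := α * a00)
    fun t => (hL t 0).trans_eq (by ring)
  have h02 : -(2 * a02) = 0 := cubic_leading_eq_zero_of_nonneg
    (b := 4 * a02 - a01 - a11 + α * a02) (c := 2 * a01 - a10 + α * a01) (d := α * a00)
    fun t => (hL 0 t).trans_eq (by ring)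
  have hdiag : -(2 * (a20 + a11 + a02)) = 0 := cubic_leading_eq_zero_of_nonneg
    (b := 2 * (a20 + a11 + a02) - a10 - a01 + α * (a20 + a11 + a02))
    (c := a10 + a01 + α * (a10 + a01)) (d := α * a00)
    fun t => (hL t t).trans_eq (by ring)
  have h0 := hI 0 0 (by norm_num)
  have hright := hU (1 / 2) 0 (by norm_num)
  have hleft := hU (-(1 / 2)) 0 (by norm_num)
  linarith
end
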